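/- arXiv:2205.01456 — 8 statements merged into one kernel-verified Lean document; each statement's English description precedes it below -/
import Mathlib

section
/- For every sequence of positive integers t = t(n) with ⌈n/2⌉ + t(n) ≤ ⌈4n/5⌉, there exists a sequence of sets A_n ⊆ [n] with |A_n| = ⌈n/2⌉ + t(n) such that for every sequence p = p(n) ∈ [0,1] with p(n) = o(min{n^{−2/3}, t(n)^{−1}}), the probability that A_n ∪ [n]_{p(n)} is Schur tends to 0 as n → ∞. -/
open Filter

/-- A set `S` is *Schur* if every 2-colouring of its elements yields a monochromatic
triple `x, y, z ∈ S` (not necessarily distinct) with `x + y = z`. -/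
def IsSchur {α : Type*} [Add α] (S : Set α) : Prop :=
  ∀ f : α → Bool, ∃ x ∈ S, ∃ y ∈ S, ∃ z ∈ S, f x = f y ∧ f y = f z ∧ x + y = z

/-- The probability that the random subset `[m]_p` of `{1, …, m}`, in which each element is
included independently with probability `p`, lies in the event `E`. -/
noncomputable def randProb (m : ℕ) (p : ℝ) (E : Set (Finset ℕ)) : ℝ :=
  ∑ S ∈ (Finset.Icc 1 m).powerset,
    E.indicator (fun T => p ^ T.card * (1 - p) ^ (m - T.card)) S

/-! Take `A = [⌊n/2⌋ - t + 1, n]`. If `S ⊆ [n]` is sum-free and has no element `≤ 2t`, then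
`A ∪ S` is not Schur: for `4t ≤ n` colour `[1, ⌊n/2⌋ - t] ∪ (n - 2t, n]` red and the rest blue;
otherwise `A ∪ S ⊆ (n/5, n]`, and `(n/5, 2n/5] ∪ (4n/5, n]` against `(2n/5, 4n/5]` works.
So if `A ∪ [n]_p` is Schur, then `[n]_p` contains an element `≤ 2t`, a pair `{x, 2x}` or a
triple `{x, y, x + y}`, and by the union bound this has probability at most
`2tp + np² + n²p³ = o(1)`. -/

open Finset

lemma Nat.ceil_natCast_div_natCast (a b : ℕ) (hb : 0 < b) :
    ⌈(a : ℚ) / b⌉₊ = (a + b - 1) / b := by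
  have hb' : (0 : ℚ) < b := by exact_mod_cast hb
  refine le_antisymm (Nat.ceil_le.2 ?_) ((Nat.div_le_iff_le_mul_add_pred hb).2 ?_)
  · have := Nat.lt_mul_div_succ (a + b - 1) hb
    rw [mul_add_one] at this
    rw [div_le_iff₀ hb', mul_comm]
    exact_mod_cast (show a ≤ b * ((a + b - 1) / b) by omega)
  · have := Nat.le_ceil ((a : ℚ) / b)
    rw [div_le_iff₀ hb'] at this
    have : a ≤ b * ⌈(a : ℚ) / b⌉₊ := by rw [mul_comm]; exact_mod_cast this
    omega

lemma Nat.ceil_natCast_div_two (n : ℕ) : ⌈(n : ℚ) / 2⌉₊ = (n + 1) / 2 := by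
  simpa using Nat.ceil_natCast_div_natCast n 2 two_pos

lemma le_half_and_lt_five_mul_of_ceil_add_le_ceil {n t : ℕ}
    (h : ⌈(n : ℚ) / 2⌉₊ + t ≤ ⌈(4 * n : ℚ) / 5⌉₊) :
    t ≤ n / 2 ∧ n < 5 * (n / 2 - t + 1) := by
  rw [Nat.ceil_natCast_div_two,
    show (4 * n : ℚ) / 5 = ((4 * n : ℕ) : ℚ) / (5 : ℕ) by push_cast; ring,
    Nat.ceil_natCast_div_natCast (4 * n) 5 (by norm_num)] at h
  norm_num at h
  have := Nat.div_mul_le_self (n + 1) 2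
  have := Nat.lt_div_mul_add (a := n) (b := 2) two_pos
  omega

lemma not_isSchur_of_forall_lt_five_mul {n : ℕ} {X : Set ℕ} (hX : ∀ x ∈ X, n < 5 * x ∧ x ≤ n) :
    ¬ IsSchur X := by
  intro h
  obtain ⟨x, hx, y, hy, z, hz, hxy, hyz, rfl⟩ :=
    h fun w => decide (5 * w ≤ 2 * n ∨ 4 * n < 5 * w)
  simp only [decide_eq_decide] at hxy hyz
  have := hX x hx; have := hX y hy; have := hX _ hz
  omega

lemma not_isSchur_Icc_union {n m : ℕ} {S : Set ℕ} (hmn : 4 * m ≤ n)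
    (hS : ∀ x ∈ S, 2 * m < x ∧ x ≤ n) (hfree : ∀ x ∈ S, ∀ y ∈ S, x + y ∉ S) :
    ¬ IsSchur (Set.Icc (n / 2 - m + 1) n ∪ S) := by
  intro h
  obtain ⟨x, hx, y, hy, z, hz, hxy, hyz, rfl⟩ :=
    h fun w => decide (w ≤ n / 2 - m ∨ n - 2 * m < w)
  simp only [decide_eq_decide] at hxy hyz
  have mem : ∀ w ∈ Set.Icc (n / 2 - m + 1) n ∪ S, w ≤ n ∧ (w ≤ n / 2 - m → w ∈ S) := by
    rintro w (hw | hw)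
    · exact ⟨hw.2, fun _ => by have := hw.1; omega⟩
    · exact ⟨(hS w hw).2, fun _ => hw⟩
  obtain ⟨hxn, hxS⟩ := mem x hx
  obtain ⟨hyn, hyS⟩ := mem y hy
  obtain ⟨hzn, hzS⟩ := mem _ hz
  by_cases hxl : x ≤ n / 2 - m
  · have := (hS x (hxS hxl)).1
    by_cases hyl : y ≤ n / 2 - m
    · exact hfree x (hxS hxl) y (hyS hyl) (hzS (by omega))
    · omega
  · by_cases hyl : y ≤ n / 2 - m
    · have := (hS y (hyS hyl)).1
      omega
    · omega

lemma exists_le_or_add_mem_of_isSchur {n m : ℕ} {S : Set ℕ} (hn : n < 5 * (n / 2 - m + 1))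
    (hS : ∀ x ∈ S, x ≤ n) (h : IsSchur (Set.Icc (n / 2 - m + 1) n ∪ S)) :
    (∃ x ∈ S, x ≤ 2 * m) ∨ ∃ x ∈ S, ∃ y ∈ S, x + y ∈ S := by
  by_contra! hcon
  obtain ⟨hlarge, hfree⟩ := hcon
  by_cases hmn : 4 * m ≤ n
  · exact not_isSchur_Icc_union hmn (fun x hx => ⟨hlarge x hx, hS x hx⟩) hfree h
  · refine not_isSchur_of_forall_lt_five_mul (n := n) ?_ h
    rintro x (hx | hx)
    · have := hx.1; have := hx.2; omega
    · have := hlarge x hx; have := hS x hx; omega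

lemma Finset.sum_powerset_filter_superset_pow_mul_pow {α R : Type*} [DecidableEq α]
    [CommSemiring R] {D U : Finset α} (hDU : D ⊆ U) (a b : R) :
    ∑ S ∈ U.powerset with D ⊆ S, a ^ #S * b ^ (#U - #S) = a ^ #D * (a + b) ^ (#U - #D) := by
  have hIcc : {S ∈ U.powerset | D ⊆ S} = Icc D U := by
    ext S; simp [and_comm]
  have hinj : Set.InjOn (D ∪ ·) (U \ D).powerset := fun T hT T' hT' h => by
    simp only [coe_powerset, Set.mem_preimage, Set.mem_powerset_iff, coe_subset,
      subset_sdiff] at hT hT'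
    simpa [union_sdiff_cancel_left hT.2.symm, union_sdiff_cancel_left hT'.2.symm]
      using congrArg (· \ D) h
  rw [hIcc, Icc_eq_image_powerset hDU, sum_image hinj, ← card_sdiff_of_subset hDU,
    ← sum_pow_mul_eq_add_pow, mul_sum]
  refine sum_congr rfl fun T hT => ?_
  have hT := mem_powerset.1 hT
  have hdisj : Disjoint D T := (subset_sdiff.1 hT).2.symm
  have hcard : #(U \ D) = #U - #D := card_sdiff_of_subset hDU
  have hTU : #T ≤ #U - #D := hcard ▸ card_le_card hT
  rw [card_union_of_disjoint hdisj, pow_add, mul_assoc, hcard]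
  congr 3
  omega

section RandomSubset

variable {m : ℕ} {p : ℝ}

lemma randProb_weight_nonneg (hp : p ∈ Set.Icc (0 : ℝ) 1) (S : Finset ℕ) :
    0 ≤ p ^ #S * (1 - p) ^ (m - #S) :=
  mul_nonneg (pow_nonneg hp.1 _) (pow_nonneg (sub_nonneg.2 hp.2) _)

lemma randProb_nonneg (hp : p ∈ Set.Icc (0 : ℝ) 1) (E : Set (Finset ℕ)) :
    0 ≤ randProb m p E :=
  sum_nonneg fun S _ => Set.indicator_nonneg (fun T _ => randProb_weight_nonneg hp T) S

lemma sum_powerset_filter_superset_randProb_weight_le (hp : p ∈ Set.Icc (0 : ℝ) 1)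
    (D : Finset ℕ) :
    ∑ S ∈ (Icc 1 m).powerset with D ⊆ S, p ^ #S * (1 - p) ^ (m - #S) ≤ p ^ #D := by
  by_cases hD : D ⊆ Icc 1 m
  · have h := sum_powerset_filter_superset_pow_mul_pow hD p (1 - p)
    rw [Nat.card_Icc, Nat.add_sub_cancel] at h
    simp [h]
  · rw [filter_eq_empty_iff.2 fun S hS hDS => hD (hDS.trans (mem_powerset.1 hS)), sum_empty]
    exact pow_nonneg hp.1 _

lemma randProb_le_sum_of_forall_exists_subset {ι : Type*} (hp : p ∈ Set.Icc (0 : ℝ) 1)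
    {E : Set (Finset ℕ)} (C : Finset ι) (D : ι → Finset ℕ)
    (hcov : ∀ S ⊆ Icc 1 m, S ∈ E → ∃ i ∈ C, D i ⊆ S) :
    randProb m p E ≤ ∑ i ∈ C, p ^ #(D i) := by
  classical
  calc randProb m p E
      ≤ ∑ S ∈ (Icc 1 m).powerset, ∑ i ∈ C with D i ⊆ S,
          p ^ #S * (1 - p) ^ (m - #S) := by
        refine sum_le_sum fun S hS => ?_
        rw [Set.indicator_apply]
        split_ifs with hSE
        · obtain ⟨i, hi, hDS⟩ := hcov S (mem_powerset.1 hS) hSE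
          exact single_le_sum (fun _ _ => randProb_weight_nonneg hp S) (mem_filter.2 ⟨hi, hDS⟩)
        · exact sum_nonneg fun _ _ => randProb_weight_nonneg hp S
    _ = ∑ i ∈ C, ∑ S ∈ (Icc 1 m).powerset with D i ⊆ S, p ^ #S * (1 - p) ^ (m - #S) :=
        sum_comm' fun S i => by simp only [mem_filter]; tauto
    _ ≤ ∑ i ∈ C, p ^ #(D i) :=
        sum_le_sum fun i _ => sum_powerset_filter_superset_randProb_weight_le hp (D i)

end RandomSubset

lemma randProb_isSchur_Icc_union_le {n m : ℕ} {p : ℝ} (hp : p ∈ Set.Icc (0 : ℝ) 1)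
    (hn : n < 5 * (n / 2 - m + 1)) :
    randProb n p {S | IsSchur ((↑(Icc (n / 2 - m + 1) n) ∪ ↑S : Set ℕ))}
      ≤ 2 * m * p + n * p ^ 2 + n ^ 2 * p ^ 3 := by
  let C := (Icc 1 (2 * m)).disjSum ((Icc 1 n).disjSum (Icc 1 n).offDiag)
  let D : ℕ ⊕ ℕ ⊕ ℕ × ℕ → Finset ℕ :=
    Sum.elim ({·}) (Sum.elim (fun x => {x, x + x}) fun q => {q.1, q.2, q.1 + q.2})
  refine (randProb_le_sum_of_forall_exists_subset hp C D fun S hS hSchur => ?_).trans ?_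
  · have hS' : ∀ x ∈ S, 1 ≤ x ∧ x ≤ n := fun x hx => mem_Icc.1 (hS hx)
    rw [coe_Icc] at hSchur
    rcases exists_le_or_add_mem_of_isSchur hn (fun x hx => (hS' x hx).2) hSchur with
      ⟨x, hx, hxm⟩ | ⟨x, hx, y, hy, hxy⟩
    · exact ⟨.inl x, by simp [C, hxm, (hS' x hx).1], by simpa [D] using hx⟩
    · rcases eq_or_ne x y with rfl | hne
      · exact ⟨.inr (.inl x), by simp [C, hS hx],
          by simpa [D, insert_subset_iff] using ⟨hx, hxy⟩⟩
      · exact ⟨.inr (.inr (x, y)), by simp [C, hS hx, hS hy, hne],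
          by simpa [D, insert_subset_iff] using ⟨hx, hy, hxy⟩⟩
  · have hpair : ∀ x ∈ Icc 1 n, p ^ #({x, x + x} : Finset ℕ) = p ^ 2 := fun x hx => by
      rw [card_pair (by have := (mem_Icc.1 hx).1; omega)]
    have htriple : ∀ q ∈ (Icc 1 n).offDiag, p ^ #({q.1, q.2, q.1 + q.2} : Finset ℕ) = p ^ 3 :=
      fun q hq => by
        obtain ⟨hx, hy, hne⟩ := mem_offDiag.1 hq
        have := (mem_Icc.1 hx).1; have := (mem_Icc.1 hy).1
        rw [card_insert_of_notMem (by simp; omega), card_pair (by omega)]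
    have hoff : ((#(Icc 1 n).offDiag : ℕ) : ℝ) ≤ n ^ 2 := by
      rw [offDiag_card, Nat.card_Icc, Nat.add_sub_cancel]
      exact_mod_cast (Nat.sub_le _ _).trans (sq n).ge
    simp only [C, D, sum_disjSum, Sum.elim_inl, Sum.elim_inr, card_singleton, pow_one,
      sum_congr rfl hpair, sum_congr rfl htriple, sum_const, Nat.card_Icc, Nat.add_sub_cancel,
      nsmul_eq_mul, Nat.cast_mul, Nat.cast_ofNat]
    have := pow_nonneg hp.1 3
    nlinarith

lemma mul_rpow_neg_two_thirds_sq_le_one {n : ℝ} (hn : 1 ≤ n) :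
    n * (n ^ (-(2 : ℝ) / 3)) ^ 2 ≤ 1 := by
  have hn₀ : 0 ≤ n := zero_le_one.trans hn
  rw [← Real.rpow_natCast, ← Real.rpow_mul hn₀, ← Real.rpow_one_add' hn₀ (by norm_num)]
  exact Real.rpow_le_one_of_one_le_of_nonpos hn (by norm_num)

lemma sq_mul_rpow_neg_two_thirds_cube {n : ℝ} (hn : 0 < n) :
    n ^ 2 * (n ^ (-(2 : ℝ) / 3)) ^ 3 = 1 := by
  rw [← Real.rpow_natCast, ← Real.rpow_natCast, ← Real.rpow_mul hn.le, ← Real.rpow_add hn]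
  norm_num

lemma two_mul_mul_add_mul_sq_add_sq_mul_cube_le {n t p : ℝ} (hn : 1 ≤ n) (ht : 0 < t)
    (hp : 0 ≤ p) :
    2 * t * p + n * p ^ 2 + n ^ 2 * p ^ 3 ≤
      2 * (p / min (n ^ (-(2 : ℝ) / 3)) t⁻¹) + (p / min (n ^ (-(2 : ℝ) / 3)) t⁻¹) ^ 2 +
        (p / min (n ^ (-(2 : ℝ) / 3)) t⁻¹) ^ 3 := by
  set q := min (n ^ (-(2 : ℝ) / 3)) t⁻¹
  set ε := p / q
  have hn₀ : 0 < n := zero_lt_one.trans_le hn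
  have hq₀ : 0 < q := lt_min (Real.rpow_pos_of_pos hn₀ _) (inv_pos.2 ht)
  have hε : 0 ≤ ε := div_nonneg hp hq₀.le
  have hpε : p = ε * q := (div_mul_cancel₀ p hq₀.ne').symm
  have htq : t * q ≤ 1 := (le_div_iff₀' ht).1 ((min_le_right _ _).trans_eq (one_div t).symm)
  have hnq₂ : n * q ^ 2 ≤ 1 := (mul_rpow_neg_two_thirds_sq_le_one hn).trans' <|
    mul_le_mul_of_nonneg_left (pow_le_pow_left₀ hq₀.le (min_le_left _ _) 2) hn₀.le
  have hnq₃ : n ^ 2 * q ^ 3 ≤ 1 := (sq_mul_rpow_neg_two_thirds_cube hn₀).le.trans' <|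
    mul_le_mul_of_nonneg_left (pow_le_pow_left₀ hq₀.le (min_le_left _ _) 3) (sq_nonneg n)
  rw [hpε]
  linear_combination 2 * mul_le_mul_of_nonneg_left htq hε +
    mul_le_mul_of_nonneg_left hnq₂ (sq_nonneg ε) +
    mul_le_mul_of_nonneg_left hnq₃ (pow_nonneg hε 3)

/-- 0-statement of Theorem 4, dense base sets: for every sequence of
positive integers `t = t(n)` with `⌈n/2⌉ + t(n) ≤ ⌈4n/5⌉`, there is a sequence of sets
`A n ⊆ [n]` with `|A n| = ⌈n/2⌉ + t(n)` such that for every `p = o(min{n^{-2/3}, t(n)⁻¹})`,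
the probability that `A n ∪ [n]_{p(n)}` is Schur tends to `0`. -/
theorem stmt0 (t : ℕ → ℕ)
    (ht : ∀ᶠ n in atTop, 1 ≤ t n ∧ ⌈(n : ℚ) / 2⌉₊ + t n ≤ ⌈(4 * n : ℚ) / 5⌉₊) :
    ∃ A : ℕ → Finset ℕ,
      (∀ᶠ n in atTop, A n ⊆ Finset.Icc 1 n ∧ (A n).card = ⌈(n : ℚ) / 2⌉₊ + t n) ∧
      ∀ p : ℕ → ℝ, (∀ n, p n ∈ Set.Icc (0 : ℝ) 1) →
        Tendsto (fun n => p n / min ((n : ℝ) ^ (-(2 : ℝ) / 3)) ((t n : ℝ)⁻¹))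
          atTop (nhds 0) →
        Tendsto (fun n => randProb n (p n)
            {S : Finset ℕ | IsSchur ((↑(A n) ∪ ↑S : Set ℕ))})
          atTop (nhds 0) := by
  refine ⟨fun n => Finset.Icc (n / 2 - t n + 1) n, ?_, fun p hp hpo => ?_⟩
  · filter_upwards [ht] with n ⟨_, hle⟩
    have := (le_half_and_lt_five_mul_of_ceil_add_le_ceil hle).1
    refine ⟨Finset.Icc_subset_Icc (by omega) le_rfl, ?_⟩
    rw [Nat.card_Icc, Nat.ceil_natCast_div_two]
    omega
  · set ε := fun n => p n / min ((n : ℝ) ^ (-(2 : ℝ) / 3)) ((t n : ℝ)⁻¹)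
    refine squeeze_zero' (g := fun n => 2 * ε n + ε n ^ 2 + ε n ^ 3)
      (Eventually.of_forall fun n => randProb_nonneg (hp n) _) ?_ ?_
    · filter_upwards [ht, eventually_ge_atTop 1] with n ⟨ht₁, hle⟩ hn
      exact (randProb_isSchur_Icc_union_le (hp n)
        (le_half_and_lt_five_mul_of_ceil_add_le_ceil hle).2).trans
        (two_mul_mul_add_mul_sq_add_sq_mul_cube_le (by exact_mod_cast hn)
          (by exact_mod_cast ht₁) (hp n).1)
    · simpa using ((hpo.const_mul 2).add (hpo.pow 2)).add (hpo.pow 3)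
end

section
/- For every ξ > 0 and C > 0 there exists ζ > 0 such that the following holds for every positive integer n and every p ∈ [0,1] with p ≤ C·n^{−1/2}: if F ⊆ [n]³ is a collection of non-degenerate Schur triples with |F| ≥ ξ·n², then the probability that no triple (x,y,z) ∈ F has all of x, y, z in [n]_p is at most exp(−ζ·n²·p³). -/
/-!
Janson's inequality bounds the probability that `[n]_p` contains no triple of `F` by
`exp (-(μ - Δ))`, where `μ = |F| p³ ≥ ξ n² p³` and `Δ` sums `p ^ |s ∪ t|` over ordered pairs of
distinct overlapping triples. Two coordinates determine a Schur triple, so a triple meets at most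
27 others in two or more points and at most `9 n` in one point, whence
`Δ ≤ |F| (27 p³ + 9 n p⁵) ≤ (27 + 9 C²) n² p³`. Since `Δ` may exceed `μ`, Janson is applied to a
random subfamily of density `q`, which turns `μ - Δ` into `q μ - q² Δ`; a small constant `q`
makes this at least a constant multiple of `n² p³`.
-/

open Filter

open Finset

section BernoulliExpect

variable {α : Type*} [DecidableEq α]

noncomputable def bernoulliWeight (p : ℝ) (A S : Finset α) : ℝ := p ^ #S * (1 - p) ^ #(A \ S)

noncomputable def bernoulliExpect (p : ℝ) (A : Finset α) (f : Finset α → ℝ) : ℝ :=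
  ∑ S ∈ A.powerset, bernoulliWeight p A S * f S

variable {p : ℝ} {A : Finset α} {f g : Finset α → ℝ}

lemma bernoulliWeight_nonneg (hp0 : 0 ≤ p) (hp1 : p ≤ 1) (A S : Finset α) :
    0 ≤ bernoulliWeight p A S := by
  have : 0 ≤ 1 - p := by linarith
  unfold bernoulliWeight; positivity

lemma bernoulliWeight_mul_bernoulliWeight (p : ℝ) (A S T : Finset α) :
    bernoulliWeight p A S * bernoulliWeight p A T
      = bernoulliWeight p A (S ⊓ T) * bernoulliWeight p A (S ⊔ T) := by
  have h₁ := card_union_add_card_inter S T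
  have h₂ := card_union_add_card_inter (A \ S) (A \ T)
  simp only [bernoulliWeight, inf_eq_inter, sup_eq_union, sdiff_inter_distrib_right,
    sdiff_union_distrib]
  calc p ^ #S * (1 - p) ^ #(A \ S) * (p ^ #T * (1 - p) ^ #(A \ T))
      = p ^ (#S + #T) * (1 - p) ^ (#(A \ S) + #(A \ T)) := by ring
    _ = _ := by rw [← h₁, ← h₂]; ring

lemma bernoulliExpect_congr (h : ∀ S ⊆ A, f S = g S) :
    bernoulliExpect p A f = bernoulliExpect p A g :=
  sum_congr rfl fun S hS => by rw [h S (mem_powerset.1 hS)]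

lemma bernoulliExpect_insert {a : α} (ha : a ∉ A) (f : Finset α → ℝ) :
    bernoulliExpect p (insert a A) f
      = p * bernoulliExpect p A (fun S => f (insert a S)) + (1 - p) * bernoulliExpect p A f := by
  simp only [bernoulliExpect, sum_powerset_insert ha, mul_sum]
  rw [add_comm]
  congr 1 <;> refine sum_congr rfl fun S hS => ?_
  · have haS : a ∉ S := fun h => ha (mem_powerset.1 hS h)
    rw [bernoulliWeight, bernoulliWeight, insert_sdiff_insert, card_insert_of_notMem haS,
      sdiff_insert_of_notMem ha]
    ring
  · have haS : a ∉ S := fun h => ha (mem_powerset.1 hS h)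
    rw [bernoulliWeight, bernoulliWeight, insert_sdiff_of_notMem _ haS,
      card_insert_of_notMem (fun h => ha (mem_sdiff.1 h).1)]
    ring

lemma bernoulliExpect_const (c : ℝ) : bernoulliExpect p A (fun _ => c) = c := by
  induction A using Finset.induction_on with
  | empty => simp [bernoulliExpect, bernoulliWeight]
  | insert a A ha ih => rw [bernoulliExpect_insert ha, ih]; ring

lemma bernoulliExpect_mono (hp0 : 0 ≤ p) (hp1 : p ≤ 1) (h : ∀ S ⊆ A, f S ≤ g S) :
    bernoulliExpect p A f ≤ bernoulliExpect p A g :=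
  sum_le_sum fun S hS =>
    mul_le_mul_of_nonneg_left (h S (mem_powerset.1 hS)) (bernoulliWeight_nonneg hp0 hp1 A S)

lemma bernoulliExpect_nonneg (hp0 : 0 ≤ p) (hp1 : p ≤ 1) (h : ∀ S ⊆ A, 0 ≤ f S) :
    0 ≤ bernoulliExpect p A f := by
  simpa [bernoulliExpect_const] using bernoulliExpect_mono (f := fun _ => 0) hp0 hp1 h

lemma bernoulliExpect_sub (f g : Finset α → ℝ) :
    bernoulliExpect p A (fun S => f S - g S) = bernoulliExpect p A f - bernoulliExpect p A g := by
  simp only [bernoulliExpect, mul_sub, sum_sub_distrib]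

lemma bernoulliExpect_const_mul (c : ℝ) (f : Finset α → ℝ) :
    bernoulliExpect p A (fun S => c * f S) = c * bernoulliExpect p A f := by
  simp only [bernoulliExpect, mul_sum, mul_left_comm]

lemma bernoulliExpect_sum {ι : Type*} (I : Finset ι) (f : ι → Finset α → ℝ) :
    bernoulliExpect p A (fun S => ∑ i ∈ I, f i S) = ∑ i ∈ I, bernoulliExpect p A (f i) := by
  simp only [bernoulliExpect, mul_sum]
  exact sum_comm

/-- Harris' inequality for the product measure. -/
lemma bernoulliExpect_mul_le_of_monotone_of_antitone (hp0 : 0 ≤ p) (hp1 : p ≤ 1)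
    (hf0 : 0 ≤ f) (hg0 : 0 ≤ g) (hf : Monotone f) (hg : Antitone g) :
    bernoulliExpect p A (fun S => f S * g S) ≤ bernoulliExpect p A f * bernoulliExpect p A g := by
  set w := bernoulliWeight p A
  have hw : 0 ≤ w := bernoulliWeight_nonneg hp0 hp1 A
  have key := four_functions_theorem (fun S => w S * (f S * g S)) w (fun S => w S * g S)
    (fun S => w S * f S) (mul_nonneg hw (mul_nonneg hf0 hg0)) hw (mul_nonneg hw hg0)
    (mul_nonneg hw hf0) (fun S T => ?_) A.powerset A.powerset
  · have hw1 : ∑ S ∈ A.powerset, w S = 1 := by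
      simpa [bernoulliExpect] using bernoulliExpect_const (p := p) (A := A) 1
    rw [powerset_infs_powerset_self, powerset_sups_powerset_self, hw1, mul_one] at key
    rw [mul_comm]
    exact key
  · calc w S * (f S * g S) * w T = (w S * w T) * (g S * f S) := by ring
      _ = (w (S ⊓ T) * w (S ⊔ T)) * (g S * f S) := by
          rw [bernoulliWeight_mul_bernoulliWeight]
      _ ≤ (w (S ⊓ T) * w (S ⊔ T)) * (g (S ⊓ T) * f (S ⊔ T)) :=
          mul_le_mul_of_nonneg_left
            (mul_le_mul (hg inf_le_left) (hf le_sup_left) (hf0 _) (hg0 _))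
            (mul_nonneg (hw _) (hw _))
      _ = w (S ⊓ T) * g (S ⊓ T) * (w (S ⊔ T) * f (S ⊔ T)) := by ring

end BernoulliExpect

section SubsetIndicator

variable {α : Type*} [DecidableEq α] {p : ℝ} {A : Finset α}

def subsetIndicator (B S : Finset α) : ℝ := if B ⊆ S then 1 else 0

lemma subsetIndicator_nonneg (B S : Finset α) : 0 ≤ subsetIndicator B S := by
  unfold subsetIndicator; split_ifs <;> norm_num

lemma subsetIndicator_le_one (B S : Finset α) : subsetIndicator B S ≤ 1 := by
  unfold subsetIndicator; split_ifs <;> norm_num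

lemma subsetIndicator_monotone (B : Finset α) : Monotone (subsetIndicator B) := by
  intro S T hST
  unfold subsetIndicator
  split_ifs with hS hT
  · rfl
  · exact absurd (hS.trans hST) hT
  · exact zero_le_one
  · rfl

lemma subsetIndicator_union (B C S : Finset α) :
    subsetIndicator (B ∪ C) S = subsetIndicator B S * subsetIndicator C S := by
  simp only [subsetIndicator, union_subset_iff, ite_and, ite_mul, one_mul, zero_mul]

lemma bernoulliExpect_subsetIndicator_singleton_mul {b : α} (hb : b ∈ A)
    {h : Finset α → ℝ} (hh : ∀ S, h (S.erase b) = h S) :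
    bernoulliExpect p A (fun S => subsetIndicator {b} S * h S) = p * bernoulliExpect p A h := by
  have hb' : b ∉ A.erase b := notMem_erase b A
  have h_insert : ∀ S ⊆ A.erase b, h (insert b S) = h S := fun S hS => by
    rw [← hh, erase_insert fun h => hb' (hS h)]
  rw [← insert_erase hb, bernoulliExpect_insert hb', bernoulliExpect_insert hb',
    bernoulliExpect_congr (g := h) fun S hS => ?_,
    bernoulliExpect_congr (f := fun S => subsetIndicator {b} S * h S) (g := fun _ => 0)
      fun S hS => ?_, bernoulliExpect_congr h_insert, bernoulliExpect_const]
  · ring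
  · have hbS : b ∉ S := fun h => hb' (hS h)
    simp [subsetIndicator, hbS]
  · simp [subsetIndicator, h_insert S hS]

lemma bernoulliExpect_subsetIndicator_mul {B : Finset α} (hB : B ⊆ A)
    {h : Finset α → ℝ} (hh : ∀ S, h (S \ B) = h S) :
    bernoulliExpect p A (fun S => subsetIndicator B S * h S) = p ^ #B * bernoulliExpect p A h := by
  induction B using Finset.induction_on generalizing h with
  | empty => simp [subsetIndicator]
  | insert b B hbB ih =>
    have hB' : B ⊆ A := (subset_insert b B).trans hB
    have hh_B : ∀ S, h (S \ B) = h S := fun S => by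
      rw [← hh, ← hh S]
      congr 1; ext x; simp only [Finset.mem_sdiff, mem_insert]; tauto
    have hh_b : ∀ S, h (S.erase b) = h S := fun S => by
      rw [← hh, ← hh S]
      congr 1; ext x; simp only [Finset.mem_sdiff, mem_insert, mem_erase]; tauto
    have hB_b : ∀ S, subsetIndicator B (S.erase b) = subsetIndicator B S := fun S => by
      simp only [subsetIndicator, subset_erase, hbB, not_false_eq_true, and_true]
    rw [bernoulliExpect_congr (g := fun S => subsetIndicator {b} S * (subsetIndicator B S * h S))
        fun S _ => by rw [insert_eq, subsetIndicator_union, mul_assoc],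
      bernoulliExpect_subsetIndicator_singleton_mul (hB (mem_insert_self b B))
        fun S => by rw [hB_b, hh_b],
      ih hB' hh_B, card_insert_of_notMem hbB]
    ring

lemma bernoulliExpect_subsetIndicator {B : Finset α} (hB : B ⊆ A) :
    bernoulliExpect p A (subsetIndicator B) = p ^ #B := by
  simpa [bernoulliExpect_const] using
    bernoulliExpect_subsetIndicator_mul (p := p) hB (h := fun _ => 1) fun _ => rfl

end SubsetIndicator

lemma one_sub_sum_le_prod_one_sub {ι : Type*} (J : Finset ι) {x : ι → ℝ}
    (h0 : ∀ i ∈ J, 0 ≤ x i) (h1 : ∀ i ∈ J, x i ≤ 1) :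
    1 - ∑ i ∈ J, x i ≤ ∏ i ∈ J, (1 - x i) := by
  classical
  induction J using Finset.induction_on with
  | empty => simp
  | insert a J ha ih =>
    rw [sum_insert ha, prod_insert ha]
    have ih' := ih (fun i hi => h0 i (mem_insert_of_mem hi))
      (fun i hi => h1 i (mem_insert_of_mem hi))
    have ha0 := h0 a (mem_insert_self a J)
    have ha1 := h1 a (mem_insert_self a J)
    have hs : 0 ≤ ∑ i ∈ J, x i := sum_nonneg fun i hi => h0 i (mem_insert_of_mem hi)
    nlinarith

lemma le_exp_neg_mul_of_le_sub_mul {X E E₀ c : ℝ} (hE : 0 ≤ E) (hEE₀ : E ≤ E₀)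
    (hXE : X ≤ E) (hX : X ≤ E - c * E₀) : X ≤ Real.exp (-c) * E := by
  rcases le_or_gt 0 c with hc | hc
  · have := Real.add_one_le_exp (-c)
    nlinarith
  · have : 1 ≤ Real.exp (-c) := Real.one_le_exp (by linarith)
    nlinarith

section Janson

variable {α ι : Type*} [DecidableEq α] {p q : ℝ} {A : Finset α} {B : ι → Finset α}

def avoidIndicator (B : ι → Finset α) (J : Finset ι) (S : Finset α) : ℝ :=
  ∏ i ∈ J, (1 - subsetIndicator (B i) S)

noncomputable def jansonMu (p : ℝ) (B : ι → Finset α) (J : Finset ι) : ℝ :=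
  ∑ i ∈ J, p ^ #(B i)

lemma avoidIndicator_nonneg (J : Finset ι) (S : Finset α) : 0 ≤ avoidIndicator B J S :=
  prod_nonneg fun _ _ => sub_nonneg.2 (subsetIndicator_le_one _ _)

lemma avoidIndicator_antitone (J : Finset ι) : Antitone (avoidIndicator B J) := fun _ _ hST =>
  prod_le_prod (fun _ _ => sub_nonneg.2 (subsetIndicator_le_one _ _))
    fun _ _ => sub_le_sub_left (subsetIndicator_monotone _ hST) 1

lemma avoidIndicator_eq_ite (B : ι → Finset α) (J : Finset ι) (S : Finset α)
    [Decidable (∀ j ∈ J, ¬B j ⊆ S)] :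
    avoidIndicator B J S = if ∀ j ∈ J, ¬B j ⊆ S then 1 else 0 := by
  split_ifs with h
  · exact prod_eq_one fun j hj => by simp [subsetIndicator, h j hj]
  · push Not at h
    obtain ⟨j, hj, hBj⟩ := h
    exact prod_eq_zero hj (by simp [subsetIndicator, hBj])

lemma avoidIndicator_le_of_subset {J F : Finset ι} (hJF : J ⊆ F) (S : Finset α) :
    avoidIndicator B F S ≤ avoidIndicator B J S := by
  classical
  rw [avoidIndicator, ← prod_sdiff hJF]
  refine mul_le_of_le_one_left (avoidIndicator_nonneg J S)
    (prod_le_one (fun _ _ => ?_) fun j _ => ?_)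
  · exact sub_nonneg.2 (subsetIndicator_le_one _ _)
  · linarith [subsetIndicator_nonneg (B j) S]

lemma bernoulliExpect_subsetIndicator_mul_avoidIndicator_le (hp0 : 0 ≤ p) (hp1 : p ≤ 1)
    {C : Finset α} (hC : C ⊆ A) (J : Finset ι) :
    bernoulliExpect p A (fun S => subsetIndicator C S * avoidIndicator B J S)
      ≤ p ^ #C * bernoulliExpect p A (avoidIndicator B J) := by
  rw [← bernoulliExpect_subsetIndicator hC]
  exact bernoulliExpect_mul_le_of_monotone_of_antitone hp0 hp1 (subsetIndicator_nonneg C)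
    (avoidIndicator_nonneg J) (subsetIndicator_monotone C) (avoidIndicator_antitone J)

lemma bernoulliExpect_subsetIndicator_mul_avoidIndicator_of_disjoint {C : Finset α} (hC : C ⊆ A)
    {J : Finset ι} (hJ : ∀ j ∈ J, Disjoint C (B j)) :
    bernoulliExpect p A (fun S => subsetIndicator C S * avoidIndicator B J S)
      = p ^ #C * bernoulliExpect p A (avoidIndicator B J) :=
  bernoulliExpect_subsetIndicator_mul hC fun S => prod_congr rfl fun j hj => by
    simp only [subsetIndicator, subset_sdiff, (hJ j hj).symm, and_true]

variable [DecidableEq ι]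

noncomputable def overlapWeight (p : ℝ) (B : ι → Finset α) (i j : ι) : ℝ :=
  if i ≠ j ∧ ¬Disjoint (B i) (B j) then p ^ #(B i ∪ B j) else 0

noncomputable def jansonDelta (p : ℝ) (B : ι → Finset α) (J : Finset ι) : ℝ :=
  ∑ i ∈ J, ∑ j ∈ J, overlapWeight p B i j

lemma avoidIndicator_insert {i : ι} {J : Finset ι} (hi : i ∉ J) (S : Finset α) :
    avoidIndicator B (insert i J) S
      = avoidIndicator B J S - subsetIndicator (B i) S * avoidIndicator B J S := by
  rw [avoidIndicator, prod_insert hi, avoidIndicator]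
  ring

lemma overlapWeight_nonneg (hp0 : 0 ≤ p) (B : ι → Finset α) (i j : ι) :
    0 ≤ overlapWeight p B i j := by
  unfold overlapWeight; split_ifs <;> positivity

@[simp] lemma overlapWeight_self (p : ℝ) (B : ι → Finset α) (i : ι) :
    overlapWeight p B i i = 0 := by
  simp [overlapWeight]

/-- The core of Janson's inequality: splitting `J` by whether `B j` meets `B i`, independence
handles the disjoint part, and the union bound plus Harris' inequality the overlapping part. -/
lemma mul_bernoulliExpect_avoidIndicator_filter_le (hp0 : 0 ≤ p) (hp1 : p ≤ 1) {i : ι}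
    {J : Finset ι} (hi : i ∉ J) (hB : ∀ j ∈ insert i J, B j ⊆ A) :
    (p ^ #(B i) - ∑ j ∈ J, overlapWeight p B i j) *
        bernoulliExpect p A (avoidIndicator B (J.filter fun j => Disjoint (B i) (B j)))
      ≤ bernoulliExpect p A (fun S => subsetIndicator (B i) S * avoidIndicator B J S) := by
  set J₀ := J.filter fun j => Disjoint (B i) (B j)
  set J₁ := J.filter fun j => ¬Disjoint (B i) (B j)
  have hBi := hB i (mem_insert_self i J)
  have h_overlap : ∑ j ∈ J, overlapWeight p B i j = ∑ j ∈ J₁, p ^ #(B i ∪ B j) := by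
    rw [sum_filter]
    refine sum_congr rfl fun j hj => ?_
    have hij : i ≠ j := fun h => hi (h ▸ hj)
    simp [overlapWeight, hij]
  have h_pointwise : ∀ S, subsetIndicator (B i) S * avoidIndicator B J₀ S
        - ∑ j ∈ J₁, subsetIndicator (B i ∪ B j) S * avoidIndicator B J₀ S
      ≤ subsetIndicator (B i) S * avoidIndicator B J S := fun S => by
    have h_split : avoidIndicator B J₀ S * avoidIndicator B J₁ S = avoidIndicator B J S :=
      prod_filter_mul_prod_filter_not J _ _
    have h_union : 1 - ∑ j ∈ J₁, subsetIndicator (B j) S ≤ avoidIndicator B J₁ S :=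
      one_sub_sum_le_prod_one_sub J₁ (fun j _ => subsetIndicator_nonneg _ S)
        fun j _ => subsetIndicator_le_one _ S
    calc _ = subsetIndicator (B i) S * avoidIndicator B J₀ S
            * (1 - ∑ j ∈ J₁, subsetIndicator (B j) S) := by
          simp only [subsetIndicator_union, mul_sub, mul_one, mul_sum]
          ring_nf
      _ ≤ subsetIndicator (B i) S * avoidIndicator B J₀ S * avoidIndicator B J₁ S :=
          mul_le_mul_of_nonneg_left h_union
            (mul_nonneg (subsetIndicator_nonneg _ S) (avoidIndicator_nonneg J₀ S))
      _ = _ := by rw [mul_assoc, h_split]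
  calc _ = p ^ #(B i) * bernoulliExpect p A (avoidIndicator B J₀)
        - ∑ j ∈ J₁, p ^ #(B i ∪ B j) * bernoulliExpect p A (avoidIndicator B J₀) := by
        rw [h_overlap, sub_mul, sum_mul]
    _ ≤ bernoulliExpect p A (fun S => subsetIndicator (B i) S * avoidIndicator B J₀ S)
        - ∑ j ∈ J₁, bernoulliExpect p A
            (fun S => subsetIndicator (B i ∪ B j) S * avoidIndicator B J₀ S) :=
        sub_le_sub
          (bernoulliExpect_subsetIndicator_mul_avoidIndicator_of_disjoint hBi
            fun j hj => (mem_filter.1 hj).2).ge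
          (sum_le_sum fun j hj => bernoulliExpect_subsetIndicator_mul_avoidIndicator_le hp0 hp1
            (union_subset hBi (hB j (mem_insert_of_mem (mem_filter.1 hj).1))) J₀)
    _ = bernoulliExpect p A (fun S => subsetIndicator (B i) S * avoidIndicator B J₀ S
          - ∑ j ∈ J₁, subsetIndicator (B i ∪ B j) S * avoidIndicator B J₀ S) := by
        rw [bernoulliExpect_sub, bernoulliExpect_sum]
    _ ≤ _ := bernoulliExpect_mono hp0 hp1 fun S _ => h_pointwise S

lemma bernoulliExpect_avoidIndicator_insert_le (hp0 : 0 ≤ p) (hp1 : p ≤ 1) {i : ι}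
    {J : Finset ι} (hi : i ∉ J) (hB : ∀ j ∈ insert i J, B j ⊆ A) :
    bernoulliExpect p A (avoidIndicator B (insert i J))
      ≤ Real.exp (-(p ^ #(B i) - ∑ j ∈ J, overlapWeight p B i j))
        * bernoulliExpect p A (avoidIndicator B J) := by
  refine le_exp_neg_mul_of_le_sub_mul
    (bernoulliExpect_nonneg hp0 hp1 fun S _ => avoidIndicator_nonneg J S)
    (bernoulliExpect_mono hp0 hp1 fun S _ => avoidIndicator_le_of_subset
      (filter_subset (fun j => Disjoint (B i) (B j)) J) S)
    (bernoulliExpect_mono hp0 hp1 fun S _ => avoidIndicator_le_of_subset (subset_insert i J) S) ?_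
  rw [bernoulliExpect_congr fun S _ => avoidIndicator_insert hi S, bernoulliExpect_sub]
  linarith [mul_bernoulliExpect_avoidIndicator_filter_le hp0 hp1 hi hB]

lemma jansonDelta_add_sum_overlapWeight_le (hp0 : 0 ≤ p) {i : ι} {J : Finset ι} (hi : i ∉ J) :
    jansonDelta p B J + ∑ j ∈ J, overlapWeight p B i j ≤ jansonDelta p B (insert i J) := by
  simp only [jansonDelta, sum_insert hi, overlapWeight_self, zero_add, sum_add_distrib]
  linarith [sum_nonneg fun j (_ : j ∈ J) => overlapWeight_nonneg hp0 B j i]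

/-- **Janson's inequality**. -/
theorem bernoulliExpect_avoidIndicator_le_exp (hp0 : 0 ≤ p) (hp1 : p ≤ 1) (J : Finset ι)
    (hB : ∀ j ∈ J, B j ⊆ A) :
    bernoulliExpect p A (avoidIndicator B J)
      ≤ Real.exp (-(jansonMu p B J - jansonDelta p B J)) := by
  induction J using Finset.induction_on with
  | empty =>
    have h_one : avoidIndicator B (∅ : Finset ι) = fun _ => 1 := funext fun _ => prod_empty
    simp [h_one, jansonMu, jansonDelta, bernoulliExpect_const]
  | insert i J hi ih =>
    have hΔ := jansonDelta_add_sum_overlapWeight_le hp0 hi (B := B)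
    calc _ ≤ Real.exp (-(p ^ #(B i) - ∑ j ∈ J, overlapWeight p B i j))
          * bernoulliExpect p A (avoidIndicator B J) :=
          bernoulliExpect_avoidIndicator_insert_le hp0 hp1 hi hB
      _ ≤ Real.exp (-(p ^ #(B i) - ∑ j ∈ J, overlapWeight p B i j))
          * Real.exp (-(jansonMu p B J - jansonDelta p B J)) := by
          gcongr
          exact ih fun j hj => hB j (mem_insert_of_mem hj)
      _ ≤ _ := by
          have hμ : jansonMu p B (insert i J) = p ^ #(B i) + jansonMu p B J := sum_insert hi
          rw [← Real.exp_add, hμ]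
          gcongr
          linarith

omit [DecidableEq α] in
lemma sum_eq_sum_mul_subsetIndicator {J F : Finset ι} (hJF : J ⊆ F) (a : ι → ℝ) :
    ∑ t ∈ J, a t = ∑ t ∈ F, a t * subsetIndicator {t} J := by
  simp [subsetIndicator, mul_ite, sum_ite_mem, inter_eq_right.2 hJF]

lemma overlapWeight_mul_pow_card_union (q : ℝ) (s t : ι) :
    overlapWeight p B s t * q ^ #({s} ∪ {t}) = q ^ 2 * overlapWeight p B s t := by
  rcases eq_or_ne s t with rfl | hst
  · simp
  · rw [← insert_eq, card_pair hst]
    ring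

omit [DecidableEq α] in
lemma bernoulliExpect_jansonMu (q : ℝ) (F : Finset ι) :
    bernoulliExpect q F (jansonMu p B) = q * jansonMu p B F := by
  rw [bernoulliExpect_congr (f := jansonMu p B)
    (g := fun J => ∑ t ∈ F, p ^ #(B t) * subsetIndicator {t} J)
    fun J hJ => sum_eq_sum_mul_subsetIndicator hJ _, bernoulliExpect_sum, jansonMu, mul_sum]
  refine sum_congr rfl fun t ht => ?_
  rw [bernoulliExpect_const_mul, bernoulliExpect_subsetIndicator (singleton_subset_iff.2 ht),
    card_singleton, pow_one, mul_comm]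

lemma bernoulliExpect_jansonDelta (q : ℝ) (F : Finset ι) :
    bernoulliExpect q F (jansonDelta p B) = q ^ 2 * jansonDelta p B F := by
  have h_expand : ∀ J ⊆ F, jansonDelta p B J
      = ∑ s ∈ F, ∑ t ∈ F, overlapWeight p B s t * subsetIndicator ({s} ∪ {t}) J :=
      fun J hJ => by
    rw [jansonDelta, sum_eq_sum_mul_subsetIndicator hJ]
    refine sum_congr rfl fun s _ => ?_
    rw [sum_eq_sum_mul_subsetIndicator hJ, sum_mul]
    refine sum_congr rfl fun t _ => ?_
    rw [subsetIndicator_union]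
    ring
  rw [bernoulliExpect_congr h_expand, bernoulliExpect_sum, jansonDelta, mul_sum]
  refine sum_congr rfl fun s hs => ?_
  rw [bernoulliExpect_sum, mul_sum]
  refine sum_congr rfl fun t ht => ?_
  rw [bernoulliExpect_const_mul, bernoulliExpect_subsetIndicator
    (union_subset (singleton_subset_iff.2 hs) (singleton_subset_iff.2 ht)),
    overlapWeight_mul_pow_card_union]

/-- The deletion method: a `q`-random subfamily keeps a `q`-fraction of `μ` but only a
`q ^ 2`-fraction of `Δ`. -/
lemma exists_subset_mul_jansonMu_sub_le (hq0 : 0 ≤ q) (hq1 : q ≤ 1) (p : ℝ)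
    (B : ι → Finset α) (F : Finset ι) : ∃ J ⊆ F,
      q * jansonMu p B F - q ^ 2 * jansonDelta p B F ≤ jansonMu p B J - jansonDelta p B J := by
  obtain ⟨J, hJ, hmax⟩ := exists_max_image F.powerset
    (fun J => jansonMu p B J - jansonDelta p B J) ⟨∅, empty_mem_powerset F⟩
  refine ⟨J, mem_powerset.1 hJ, ?_⟩
  calc _ = bernoulliExpect q F (fun J => jansonMu p B J - jansonDelta p B J) := by
        rw [bernoulliExpect_sub, bernoulliExpect_jansonMu, bernoulliExpect_jansonDelta]
    _ ≤ bernoulliExpect q F (fun _ => jansonMu p B J - jansonDelta p B J) :=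
        bernoulliExpect_mono hq0 hq1 fun J' hJ' => hmax J' (mem_powerset.2 hJ')
    _ = _ := bernoulliExpect_const _

theorem bernoulliExpect_avoidIndicator_le_exp_mul_sub (hp0 : 0 ≤ p) (hp1 : p ≤ 1)
    (hq0 : 0 ≤ q) (hq1 : q ≤ 1) (F : Finset ι) (hB : ∀ j ∈ F, B j ⊆ A) :
    bernoulliExpect p A (avoidIndicator B F)
      ≤ Real.exp (-(q * jansonMu p B F - q ^ 2 * jansonDelta p B F)) := by
  obtain ⟨J, hJF, hJ⟩ := exists_subset_mul_jansonMu_sub_le hq0 hq1 p B F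
  calc _ ≤ bernoulliExpect p A (avoidIndicator B J) :=
        bernoulliExpect_mono hp0 hp1 fun S _ => avoidIndicator_le_of_subset hJF S
    _ ≤ Real.exp (-(jansonMu p B J - jansonDelta p B J)) :=
        bernoulliExpect_avoidIndicator_le_exp hp0 hp1 J fun j hj => hB j (hJF hj)
    _ ≤ _ := Real.exp_le_exp.2 (by linarith)

end Janson

lemma mem_and_mem_of_two_le_card_inter {α : Type*} [DecidableEq α] {X : Finset α} {x y z : α}
    (h : 2 ≤ #(X ∩ {x, y, z})) :
    (x ∈ X ∧ y ∈ X) ∨ (x ∈ X ∧ z ∈ X) ∨ (y ∈ X ∧ z ∈ X) := by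
  by_contra! h'
  have : #(X ∩ {x, y, z}) ≤ 1 := card_le_one.2 fun a ha b hb => by
    simp only [mem_inter, mem_insert, mem_singleton] at ha hb
    aesop
  omega

section SchurTriples

def tripleSet (t : ℕ × ℕ × ℕ) : Finset ℕ := {t.1, t.2.1, t.2.2}

def IsSchurTripleIn (n : ℕ) (t : ℕ × ℕ × ℕ) : Prop :=
  t.1 ∈ Icc 1 n ∧ t.2.1 ∈ Icc 1 n ∧ t.2.2 ∈ Icc 1 n ∧
    t.1 + t.2.1 = t.2.2 ∧ t.1 ≠ t.2.1

variable {n : ℕ} {t : ℕ × ℕ × ℕ} {F : Finset (ℕ × ℕ × ℕ)}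

lemma tripleSet_subset_iff {S : Finset ℕ} :
    tripleSet t ⊆ S ↔ t.1 ∈ S ∧ t.2.1 ∈ S ∧ t.2.2 ∈ S := by
  simp [tripleSet, insert_subset_iff]

lemma IsSchurTripleIn.card_tripleSet (ht : IsSchurTripleIn n t) : #(tripleSet t) = 3 := by
  obtain ⟨h1, h2, -, hsum, hne⟩ := ht
  rw [mem_Icc] at h1 h2
  rw [tripleSet, card_insert_of_notMem, card_pair] <;> simp <;> omega

lemma IsSchurTripleIn.tripleSet_subset (ht : IsSchurTripleIn n t) : tripleSet t ⊆ Icc 1 n :=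
  tripleSet_subset_iff.2 ⟨ht.1, ht.2.1, ht.2.2.1⟩

lemma card_le_sq_of_isSchurTripleIn (hF : ∀ t ∈ F, IsSchurTripleIn n t) : #F ≤ n ^ 2 := by
  have hsub : F ⊆ (Icc 1 n ×ˢ Icc 1 n).image fun xy => (xy.1, xy.2, xy.1 + xy.2) := by
    rintro ⟨x, y, z⟩ ht
    obtain ⟨hx, hy, -, hsum, -⟩ := hF _ ht
    exact mem_image.2 ⟨(x, y), mem_product.2 ⟨hx, hy⟩, by simp_all⟩
  calc #F ≤ #(Icc 1 n ×ˢ Icc 1 n) := (card_le_card hsub).trans card_image_le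
    _ = n ^ 2 := by simp [sq]

lemma card_filter_mem_tripleSet_le (hF : ∀ t ∈ F, IsSchurTripleIn n t) (a : ℕ) :
    #{t ∈ F | a ∈ tripleSet t} ≤ 3 * n := by
  have hsub : {t ∈ F | a ∈ tripleSet t} ⊆ (Icc 1 n).image (fun b => (a, b, a + b))
      ∪ (Icc 1 n).image (fun b => (b, a, b + a))
      ∪ (Icc 1 n).image (fun b => (b, a - b, a)) := by
    rintro ⟨x, y, z⟩ ht
    obtain ⟨htF, hat⟩ := mem_filter.1 ht
    obtain ⟨hx, hy, -, hsum, -⟩ := hF _ htF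
    dsimp only at hx hy hsum
    simp only [tripleSet, mem_insert, mem_singleton] at hat
    simp only [mem_union, mem_image, Prod.mk.injEq]
    rcases hat with rfl | rfl | rfl
    · exact Or.inl (Or.inl ⟨y, hy, rfl, rfl, hsum⟩)
    · exact Or.inl (Or.inr ⟨x, hx, rfl, rfl, hsum⟩)
    · exact Or.inr ⟨x, hx, rfl, by omega, rfl⟩
  have h₁ := card_union_le ((Icc 1 n).image (fun b => (a, b, a + b)) ∪
    (Icc 1 n).image (fun b => (b, a, b + a))) ((Icc 1 n).image (fun b => (b, a - b, a)))
  have h₂ := card_union_le ((Icc 1 n).image (fun b => (a, b, a + b)))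
    ((Icc 1 n).image (fun b => (b, a, b + a)))
  have h₃ := card_image_le (s := Icc 1 n) (f := fun b => (a, b, a + b))
  have h₄ := card_image_le (s := Icc 1 n) (f := fun b => (b, a, b + a))
  have h₅ := card_image_le (s := Icc 1 n) (f := fun b => (b, a - b, a))
  have h₆ := card_le_card hsub
  simp only [Nat.card_Icc, add_tsub_cancel_right] at h₃ h₄ h₅
  omega

/-- A Schur triple is determined by any two of its coordinates. -/
lemma card_filter_two_le_card_inter_le (hF : ∀ t ∈ F, IsSchurTripleIn n t) (X : Finset ℕ) :
    #{t ∈ F | 2 ≤ #(X ∩ tripleSet t)} ≤ 3 * #X ^ 2 := by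
  have hsub : {t ∈ F | 2 ≤ #(X ∩ tripleSet t)}
      ⊆ (X ×ˢ X).image (fun xy => (xy.1, xy.2, xy.1 + xy.2))
      ∪ (X ×ˢ X).image (fun xz => (xz.1, xz.2 - xz.1, xz.2))
      ∪ (X ×ˢ X).image (fun yz => (yz.2 - yz.1, yz.1, yz.2)) := by
    rintro ⟨x, y, z⟩ ht
    obtain ⟨htF, hX⟩ := mem_filter.1 ht
    obtain ⟨-, -, -, hsum, -⟩ := hF _ htF
    dsimp only at hsum
    simp only [mem_union, mem_image, mem_product, Prod.exists, Prod.mk.injEq]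
    rcases mem_and_mem_of_two_le_card_inter hX with ⟨hx, hy⟩ | ⟨hx, hz⟩ | ⟨hy, hz⟩
    · exact Or.inl (Or.inl ⟨x, y, ⟨hx, hy⟩, rfl, rfl, hsum⟩)
    · exact Or.inl (Or.inr ⟨x, z, ⟨hx, hz⟩, rfl, by omega, rfl⟩)
    · exact Or.inr ⟨y, z, ⟨hy, hz⟩, by omega, rfl, rfl⟩
  have h₁ := card_le_card hsub
  have h₂ := card_union_le ((X ×ˢ X).image (fun xy => (xy.1, xy.2, xy.1 + xy.2))
    ∪ (X ×ˢ X).image (fun xz => (xz.1, xz.2 - xz.1, xz.2)))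
    ((X ×ˢ X).image (fun yz => (yz.2 - yz.1, yz.1, yz.2)))
  have h₃ := card_union_le ((X ×ˢ X).image (fun xy => (xy.1, xy.2, xy.1 + xy.2)))
    ((X ×ˢ X).image (fun xz => (xz.1, xz.2 - xz.1, xz.2)))
  have h₄ := card_image_le (s := X ×ˢ X) (f := fun xy => (xy.1, xy.2, xy.1 + xy.2))
  have h₅ := card_image_le (s := X ×ˢ X) (f := fun xz => (xz.1, xz.2 - xz.1, xz.2))
  have h₆ := card_image_le (s := X ×ˢ X) (f := fun yz => (yz.2 - yz.1, yz.1, yz.2))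
  rw [card_product, ← sq] at h₄ h₅ h₆
  omega

lemma card_filter_not_disjoint_tripleSet_le (hF : ∀ t ∈ F, IsSchurTripleIn n t)
    (X : Finset ℕ) : #{t ∈ F | ¬Disjoint X (tripleSet t)} ≤ #X * (3 * n) := by
  refine (card_le_card fun t ht => ?_).trans
    (card_biUnion_le_card_mul X _ _ fun a _ => card_filter_mem_tripleSet_le hF a)
  obtain ⟨htF, hX⟩ := mem_filter.1 ht
  obtain ⟨a, haX, hat⟩ := not_disjoint_iff.1 hX
  exact mem_biUnion.2 ⟨a, haX, mem_filter.2 ⟨htF, hat⟩⟩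

lemma overlapWeight_tripleSet_le (hp0 : 0 ≤ p) (hp1 : p ≤ 1) {s : ℕ × ℕ × ℕ}
    (hs : IsSchurTripleIn n s) (ht : IsSchurTripleIn n t) :
    overlapWeight p tripleSet s t
      ≤ (if 2 ≤ #(tripleSet s ∩ tripleSet t) then p ^ 3 else 0)
        + (if ¬Disjoint (tripleSet s) (tripleSet t) then p ^ 5 else 0) := by
  unfold overlapWeight
  by_cases h : s ≠ t ∧ ¬Disjoint (tripleSet s) (tripleSet t)
  · rw [if_pos h, if_pos h.2]
    by_cases h₂ : 2 ≤ #(tripleSet s ∩ tripleSet t)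
    · have h_card : 3 ≤ #(tripleSet s ∪ tripleSet t) :=
        hs.card_tripleSet ▸ card_le_card subset_union_left
      rw [if_pos h₂]
      linarith [pow_le_pow_of_le_one hp0 hp1 h_card, pow_nonneg hp0 5]
    · have h_inter : #(tripleSet s ∩ tripleSet t) = 1 := by
        have := card_pos.2 (not_disjoint_iff_nonempty_inter.1 h.2)
        omega
      have h_union := card_union_add_card_inter (tripleSet s) (tripleSet t)
      rw [h_inter, hs.card_tripleSet, ht.card_tripleSet] at h_union
      rw [if_neg h₂, zero_add, show #(tripleSet s ∪ tripleSet t) = 5 by omega]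
  · rw [if_neg h]
    positivity

lemma jansonDelta_tripleSet_le (hp0 : 0 ≤ p) (hp1 : p ≤ 1)
    (hF : ∀ t ∈ F, IsSchurTripleIn n t) :
    jansonDelta p tripleSet F ≤ #F * (27 * p ^ 3 + 9 * n * p ^ 5) := by
  rw [jansonDelta, ← nsmul_eq_mul, ← sum_const]
  refine sum_le_sum fun s hs => ?_
  have h_close := card_filter_two_le_card_inter_le hF (tripleSet s)
  have h_meet := card_filter_not_disjoint_tripleSet_le hF (tripleSet s)
  rw [(hF s hs).card_tripleSet] at h_close h_meet
  calc ∑ t ∈ F, overlapWeight p tripleSet s t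
      ≤ ∑ t ∈ F, ((if 2 ≤ #(tripleSet s ∩ tripleSet t) then p ^ 3 else 0)
        + (if ¬Disjoint (tripleSet s) (tripleSet t) then p ^ 5 else 0)) :=
        sum_le_sum fun t ht => overlapWeight_tripleSet_le hp0 hp1 (hF s hs) (hF t ht)
    _ = #{t ∈ F | 2 ≤ #(tripleSet s ∩ tripleSet t)} * p ^ 3
        + #{t ∈ F | ¬Disjoint (tripleSet s) (tripleSet t)} * p ^ 5 := by
        rw [sum_add_distrib, ← sum_filter, ← sum_filter, sum_const, sum_const, nsmul_eq_mul,
          nsmul_eq_mul]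
    _ ≤ 27 * p ^ 3 + 9 * n * p ^ 5 := by
        have h₁ : (#{t ∈ F | 2 ≤ #(tripleSet s ∩ tripleSet t)} : ℝ) ≤ 27 := by
          exact_mod_cast h_close
        have h₂ : (#{t ∈ F | ¬Disjoint (tripleSet s) (tripleSet t)} : ℝ) ≤ 9 * n := by
          exact_mod_cast (by omega : _ ≤ 9 * n)
        gcongr

lemma jansonMu_tripleSet (hF : ∀ t ∈ F, IsSchurTripleIn n t) :
    jansonMu p tripleSet F = #F * p ^ 3 := by
  rw [jansonMu, sum_congr rfl fun t ht => by rw [(hF t ht).card_tripleSet], sum_const,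
    nsmul_eq_mul]

end SchurTriples

lemma randProb_eq_bernoulliExpect (n : ℕ) (p : ℝ) (F : Finset (ℕ × ℕ × ℕ)) :
    randProb n p {S : Finset ℕ | ∀ f ∈ F, ¬(f.1 ∈ S ∧ f.2.1 ∈ S ∧ f.2.2 ∈ S)}
      = bernoulliExpect p (Icc 1 n) (avoidIndicator tripleSet F) := by
  classical
  refine sum_congr rfl fun S hS => ?_
  have h_card : #(Icc 1 n \ S) = n - #S := by
    rw [card_sdiff_of_subset (mem_powerset.1 hS), Nat.card_Icc, add_tsub_cancel_right]
  simp only [Set.indicator_apply, avoidIndicator_eq_ite, bernoulliWeight, h_card,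
    Set.mem_ofPred_eq, tripleSet_subset_iff, mul_ite, mul_one, mul_zero]

lemma natCast_mul_sq_le_sq_of_le_mul_rpow {n : ℕ} {p C : ℝ} (hp0 : 0 ≤ p)
    (hpC : p ≤ C * (n : ℝ) ^ (-(1 : ℝ) / 2)) : n * p ^ 2 ≤ C ^ 2 := by
  rcases Nat.eq_zero_or_pos n with rfl | hn
  · simp only [Nat.cast_zero, zero_mul]; positivity
  have hn' : (0 : ℝ) < n := Nat.cast_pos.2 hn
  have h_sq : ((n : ℝ) ^ (-(1 : ℝ) / 2)) ^ 2 = (n : ℝ)⁻¹ := by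
    rw [← Real.rpow_natCast, ← Real.rpow_mul hn'.le]
    norm_num [Real.rpow_neg_one]
  calc (n : ℝ) * p ^ 2 ≤ n * (C * (n : ℝ) ^ (-(1 : ℝ) / 2)) ^ 2 := by gcongr
    _ = C ^ 2 := by rw [mul_pow, h_sq]; field_simp

theorem stmt5_general (ξ C : ℝ) (hξ : 0 < ξ) :
    ∃ ζ : ℝ, 0 < ζ ∧ ∀ n : ℕ, 0 < n → ∀ p : ℝ, p ∈ Set.Icc (0 : ℝ) 1 →
      p ≤ C * (n : ℝ) ^ (-(1 : ℝ) / 2) →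
      ∀ F : Finset (ℕ × ℕ × ℕ),
        (∀ f ∈ F, f.1 ∈ Finset.Icc 1 n ∧ f.2.1 ∈ Finset.Icc 1 n ∧
          f.2.2 ∈ Finset.Icc 1 n ∧ f.1 + f.2.1 = f.2.2 ∧ f.1 ≠ f.2.1) →
        ξ * (n : ℝ) ^ 2 ≤ (F.card : ℝ) →
        randProb n p {S : Finset ℕ | ∀ f ∈ F, ¬(f.1 ∈ S ∧ f.2.1 ∈ S ∧ f.2.2 ∈ S)} ≤
          Real.exp (-ζ * (n : ℝ) ^ 2 * p ^ 3) := by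
  set K : ℝ := 27 + 9 * C ^ 2
  set q : ℝ := min 1 (ξ / (2 * K))
  have hK : 0 < K := by positivity
  have hq : 0 < q := lt_min one_pos (by positivity)
  have hqK : q * K ≤ ξ / 2 :=
    calc q * K ≤ ξ / (2 * K) * K := mul_le_mul_of_nonneg_right (min_le_right _ _) hK.le
      _ = ξ / 2 := by field_simp
  refine ⟨q * ξ / 2, by positivity, fun n _ p ⟨hp0, hp1⟩ hpC F hF hcard => ?_⟩
  have hN : 0 ≤ (n : ℝ) ^ 2 * p ^ 3 := by positivity
  have hμ : ξ * ((n : ℝ) ^ 2 * p ^ 3) ≤ jansonMu p tripleSet F := by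
    rw [jansonMu_tripleSet hF, ← mul_assoc]
    exact mul_le_mul_of_nonneg_right hcard (by positivity)
  have hΔ : jansonDelta p tripleSet F ≤ K * ((n : ℝ) ^ 2 * p ^ 3) := by
    have hF_card : (#F : ℝ) ≤ n ^ 2 := by exact_mod_cast card_le_sq_of_isSchurTripleIn hF
    have hnp := natCast_mul_sq_le_sq_of_le_mul_rpow hp0 hpC
    calc _ ≤ #F * (27 * p ^ 3 + 9 * n * p ^ 5) := jansonDelta_tripleSet_le hp0 hp1 hF
      _ ≤ n ^ 2 * (27 * p ^ 3 + 9 * n * p ^ 5) := by gcongr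
      _ = (27 + 9 * (n * p ^ 2)) * (n ^ 2 * p ^ 3) := by ring
      _ ≤ K * (n ^ 2 * p ^ 3) := by gcongr; linarith
  rw [randProb_eq_bernoulliExpect]
  refine (bernoulliExpect_avoidIndicator_le_exp_mul_sub hp0 hp1 hq.le (min_le_left _ _) F
    fun t ht => IsSchurTripleIn.tripleSet_subset (hF t ht)).trans (Real.exp_le_exp.2 ?_)
  nlinarith [mul_le_mul_of_nonneg_left hμ hq.le, mul_le_mul_of_nonneg_left hΔ (sq_nonneg q),
    mul_le_mul_of_nonneg_right hqK hN]

/-- Lemma 11, Janson for Schur triples: for every `ξ > 0` and `C > 0`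
there is `ζ > 0` such that for every `n ≥ 1` and `p ∈ [0,1]` with `p ≤ C·n^{-1/2}`, if
`F ⊆ [n]³` is a family of non-degenerate Schur triples with `|F| ≥ ξ·n²`, then the
probability that no triple of `F` lies entirely in `[n]_p` is at most `exp(-ζ·n²·p³)`. -/
theorem stmt5 (ξ C : ℝ) (hξ : 0 < ξ) (hC : 0 < C) :
    ∃ ζ : ℝ, 0 < ζ ∧ ∀ n : ℕ, 0 < n → ∀ p : ℝ, p ∈ Set.Icc (0 : ℝ) 1 →
      p ≤ C * (n : ℝ) ^ (-(1 : ℝ) / 2) →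
      ∀ F : Finset (ℕ × ℕ × ℕ),
        (∀ f ∈ F, f.1 ∈ Finset.Icc 1 n ∧ f.2.1 ∈ Finset.Icc 1 n ∧
          f.2.2 ∈ Finset.Icc 1 n ∧ f.1 + f.2.1 = f.2.2 ∧ f.1 ≠ f.2.1) →
        ξ * (n : ℝ) ^ 2 ≤ (F.card : ℝ) →
        randProb n p {S : Finset ℕ | ∀ f ∈ F, ¬(f.1 ∈ S ∧ f.2.1 ∈ S ∧ f.2.2 ∈ S)} ≤
          Real.exp (-ζ * (n : ℝ) ^ 2 * p ^ 3) :=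
  stmt5_general ξ C hξ
end

section
/- For every positive integer n, every ℓ ∈ {0,1,2,3,4}, and every nonempty set U ⊆ [n] with |U| ≥ 8 − 2ℓ, the number of wickets W ∈ [n]⁹ containing U is at most (9!)^{ℓ+1}·n^{ℓ}. -/
/-!
A wicket satisfies four additive relations `w a + w b = w c`, and in each of them any two
entries determine the third. So two wickets that agree on a set of positions agree on its closure
under "complete a relation from two of its entries". Knowing where the elements of `U` sit
(at most `9!` patterns) fixes the values on `|U|` positions; adding greedily, in the order
`0, …, 8`, every position that is not yet in the closure, a finite check shows that at most
`4 - ⌊|U| / 2⌋ ≤ ℓ` further positions are needed, and their values are taken among `n` choices.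
-/

/-- A *wicket* in `[n]` is a 9-tuple `(x₁,y₁,z₁,x₂,y₂,z₂,x₃,y₃,z₃)` of pairwise distinct
elements of `{1, …, n}` with `xᵢ + yᵢ = zᵢ` for `i = 1,2,3` and `x₁ + x₂ = x₃`.
Here `w 0, w 1, w 2, w 3, w 4, w 5, w 6, w 7, w 8` are `x₁,y₁,z₁,x₂,y₂,z₂,x₃,y₃,z₃`. -/
def IsWicket (n : ℕ) (w : Fin 9 → ℕ) : Prop :=
  (∀ i, w i ∈ Finset.Icc 1 n) ∧ Function.Injective w ∧
    w 0 + w 1 = w 2 ∧ w 3 + w 4 = w 5 ∧ w 6 + w 7 = w 8 ∧ w 0 + w 3 = w 6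

def wicketTriples : List (Fin 9 × Fin 9 × Fin 9) :=
  [(0, 1, 2), (3, 4, 5), (6, 7, 8), (0, 3, 6)]

theorem IsWicket.add_eq_of_mem_wicketTriples {n : ℕ} {w : Fin 9 → ℕ} (hw : IsWicket n w) :
    ∀ t ∈ wicketTriples, w t.1 + w t.2.1 = w t.2.2 := by
  obtain ⟨-, -, h₁, h₂, h₃, h₄⟩ := hw
  simp [wicketTriples, h₁, h₂, h₃, h₄]

/- Sets of positions are Boolean masks `Fin 9 → Bool` rather than `Finset (Fin 9)`: this keeps
the exhaustive check over all `2⁹` masks cheap enough for the kernel. -/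

def completeTriples (A : Fin 9 → Bool) (i : Fin 9) : Bool :=
  A i || wicketTriples.any fun (a, b, c) =>
    (i == a && A b && A c) || (i == b && A a && A c) || (i == c && A a && A b)

-- Three rounds of `completeTriples` already reach the closure.
def tripleClosure (A : Fin 9 → Bool) : Fin 9 → Bool :=
  completeTriples^[3] A

def extraPositions (S : Fin 9 → Bool) : List (Fin 9) :=
  (List.finRange 9).foldl
    (fun E i => if tripleClosure (fun j => S j || E.contains j) i then E else E ++ [i]) []

theorem tripleClosure_extraPositions (S : Fin 9 → Bool) (i : Fin 9) :
    tripleClosure (fun j => S j || (extraPositions S).contains j) i := by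
  revert S i
  decide +kernel

theorem length_extraPositions_add_card_div_two_le (S : Fin 9 → Bool)
    (hS : 1 ≤ (Finset.univ.filter fun i => S i).card) :
    (extraPositions S).length + (Finset.univ.filter fun i => S i).card / 2 ≤ 4 := by
  revert S
  decide +kernel

section Determination

variable {w w' : Fin 9 → ℕ}
  (hw : ∀ t ∈ wicketTriples, w t.1 + w t.2.1 = w t.2.2)
  (hw' : ∀ t ∈ wicketTriples, w' t.1 + w' t.2.1 = w' t.2.2)
include hw hw'

theorem eq_of_completeTriples {A : Fin 9 → Bool} (hA : ∀ i, A i → w i = w' i) (i : Fin 9)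
    (hi : completeTriples A i) : w i = w' i := by
  simp only [completeTriples, Bool.or_eq_true, List.any_eq_true, Bool.and_eq_true,
    beq_iff_eq] at hi
  rcases hi with hi | ⟨⟨a, b, c⟩, ht, hi⟩
  · exact hA i hi
  · have h : w a + w b = w c := hw _ ht
    have h' : w' a + w' b = w' c := hw' _ ht
    dsimp only at hi
    rcases hi with (⟨⟨rfl, hb⟩, hc⟩ | ⟨⟨rfl, ha⟩, hc⟩) | ⟨⟨rfl, ha⟩, hb⟩
    · have := hA _ hb; have := hA _ hc; omega
    · have := hA _ ha; have := hA _ hc; omega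
    · have := hA _ ha; have := hA _ hb; omega

theorem eq_of_iterate_completeTriples (k : ℕ) {A : Fin 9 → Bool} (hA : ∀ i, A i → w i = w' i) :
    ∀ i, completeTriples^[k] A i → w i = w' i := by
  induction k with
  | zero => exact hA
  | succ k ih =>
    rw [Function.iterate_succ_apply']
    exact eq_of_completeTriples hw hw' ih

theorem eq_of_eqOn_extraPositions (S : Fin 9 → Bool) (hS : ∀ i, S i → w i = w' i)
    (hE : ∀ i ∈ extraPositions S, w i = w' i) : w = w' := by
  funext i
  refine eq_of_iterate_completeTriples hw hw' 3 (fun j hj => ?_) i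
    (tripleClosure_extraPositions S i)
  rcases Bool.or_eq_true _ _ ▸ hj with hj | hj
  · exact hS j hj
  · exact hE j (List.contains_iff_mem.mp hj)

end Determination

theorem Set.ncard_le_card_mul_pow_of_determined {α β P : Type*} [Inhabited α] [Fintype P]
    {W : Set (α → β)} {s : Finset β} (hs : ∀ w ∈ W, ∀ a, w a ∈ s) {ℓ : ℕ}
    (p : W → P) (E : P → List α) (hE : ∀ w, (E (p w)).length ≤ ℓ)
    (hdet : ∀ w w' : W, p w = p w' → (∀ a ∈ E (p w), w.1 a = w'.1 a) → w = w') :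
    W.ncard ≤ Fintype.card P * s.card ^ ℓ := by
  classical
  let F : W → P × (Fin ℓ → s) := fun w =>
    (p w, fun j => ⟨w.1 ((E (p w)).getD j default), hs w.1 w.2 _⟩)
  have hF : Function.Injective F := by
    intro w w' h
    simp only [F, Prod.mk.injEq] at h
    obtain ⟨hp, hv⟩ := h
    refine hdet w w' hp fun a ha => ?_
    obtain ⟨j, hj, rfl⟩ := List.getElem_of_mem ha
    have hvj := congrArg Subtype.val (congrFun hv ⟨j, hj.trans_le (hE w)⟩)
    rwa [← hp, List.getD_eq_getElem _ _ hj] at hvj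
  calc W.ncard = Nat.card W := (Nat.card_coe_set_eq W).symm
    _ ≤ Nat.card (P × (Fin ℓ → s)) := Nat.card_le_card_of_injective F hF
    _ = Fintype.card P * s.card ^ ℓ := by
      simp [Nat.card_eq_fintype_card, Fintype.card_prod]

noncomputable def Finset.embeddingOfSubsetRange {α β : Type*} {f : α → β} {s : Finset β}
    (h : (s : Set β) ⊆ Set.range f) : s ↪ α :=
  ⟨fun b => (h b.2).choose, fun b c hbc => Subtype.ext <| by
    rw [← (h b.2).choose_spec, ← (h c.2).choose_spec]
    exact congrArg f hbc⟩

theorem Finset.apply_embeddingOfSubsetRange {α β : Type*} {f : α → β} {s : Finset β}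
    (h : (s : Set β) ⊆ Set.range f) (b : s) : f (embeddingOfSubsetRange h b) = b :=
  (h b.2).choose_spec

theorem Nat.descFactorial_le_factorial (n k : ℕ) : n.descFactorial k ≤ n.factorial := by
  rcases le_or_gt k n with h | h
  · rw [← Nat.factorial_mul_descFactorial h]
    exact Nat.le_mul_of_pos_left _ (Nat.factorial_pos _)
  · rw [Nat.descFactorial_eq_zero_iff_lt.mpr h]
    exact Nat.zero_le _

theorem stmt7_general (n : ℕ) (ℓ : ℕ) (U : Finset ℕ)
    (hU : U.Nonempty) (hcard : 8 - 2 * ℓ ≤ U.card) :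
    {w : Fin 9 → ℕ | IsWicket n w ∧ ∀ u ∈ U, ∃ i, w i = u}.ncard ≤
      (Nat.factorial 9) ^ (ℓ + 1) * n ^ ℓ := by
  classical
  set W := {w : Fin 9 → ℕ | IsWicket n w ∧ ∀ u ∈ U, ∃ i, w i = u}
  have hrange : ∀ w : W, (U : Set ℕ) ⊆ Set.range w.1 := fun w u hu => w.2.2 u hu
  let p : W → (U ↪ Fin 9) := fun w => Finset.embeddingOfSubsetRange (hrange w)
  have hp : ∀ (w : W) (u : U), w.1 (p w u) = u := fun w =>
    Finset.apply_embeddingOfSubsetRange (hrange w)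
  let S : (U ↪ Fin 9) → Fin 9 → Bool := fun φ i => decide (i ∈ Finset.univ.map φ)
  have hS : ∀ φ, (Finset.univ.filter fun i => S φ i).card = U.card := fun φ => by
    simp only [S, decide_eq_true_eq, Finset.filter_mem_eq_inter, Finset.univ_inter,
      Finset.card_map, Finset.card_univ, Fintype.card_coe]
  have hlen : ∀ w, (extraPositions (S (p w))).length ≤ ℓ := fun w => by
    have := length_extraPositions_add_card_div_two_le (S (p w)) (by rw [hS]; exact hU.card_pos)
    rw [hS] at this
    omega
  have hdet : ∀ w w' : W, p w = p w' →
      (∀ i ∈ extraPositions (S (p w)), w.1 i = w'.1 i) → w = w' := by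
    intro w w' hpw hE
    refine Subtype.ext (eq_of_eqOn_extraPositions w.2.1.add_eq_of_mem_wicketTriples
      w'.2.1.add_eq_of_mem_wicketTriples (S (p w)) (fun i hi => ?_) hE)
    obtain ⟨u, -, rfl⟩ := Finset.mem_map.mp (of_decide_eq_true hi)
    rw [hp, hpw, hp]
  calc W.ncard ≤ Fintype.card (U ↪ Fin 9) * (Finset.Icc 1 n).card ^ ℓ :=
        Set.ncard_le_card_mul_pow_of_determined (fun w hw => hw.1.1) p
          (fun φ => extraPositions (S φ)) hlen hdet
    _ = Nat.descFactorial 9 U.card * n ^ ℓ := by simp [Fintype.card_embedding_eq]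
    _ ≤ Nat.factorial 9 ^ (ℓ + 1) * n ^ ℓ := by
      gcongr
      exact (Nat.descFactorial_le_factorial 9 _).trans (Nat.le_self_pow (by omega) _)

/-- Claim 14: for `ℓ ∈ {0,1,2,3,4}` and any nonempty `U ⊆ [n]` with
`|U| ≥ 8 - 2ℓ`, the number of wickets containing every element of `U` among their entries
is at most `(9!)^{ℓ+1}·n^ℓ`. -/
theorem stmt7 (n : ℕ) (hn : 0 < n) (ℓ : ℕ) (hℓ : ℓ ≤ 4) (U : Finset ℕ)
    (hU : U.Nonempty) (hUn : U ⊆ Finset.Icc 1 n) (hcard : 8 - 2 * ℓ ≤ U.card) :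
    {w : Fin 9 → ℕ | IsWicket n w ∧ ∀ u ∈ U, ∃ i, w i = u}.ncard ≤
      (Nat.factorial 9) ^ (ℓ + 1) * n ^ ℓ :=
  stmt7_general n ℓ U hU hcard
end

section
/- For all positive integers a, x, d, the set L₁(a,x,d) = {d, x, x+d, a, a+d, a+2d, a+3d, a+x, a+x+d, a+x+2d, a+x+3d} is Schur. -/
set_option maxRecDepth 4000 in
set_option synthInstance.maxHeartbeats 1000000 in
set_option synthInstance.maxSize 2000 in
lemma schur_key : ∀ b1 b2 b3 b4 b5 b6 b7 b8 b9 b10 b11 : Bool,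
    (b1 = b2 ∧ b2 = b3) ∨ (b1 = b4 ∧ b4 = b5) ∨ (b1 = b5 ∧ b5 = b6) ∨ (b1 = b6 ∧ b6 = b7) ∨ (b1 = b8 ∧ b8 = b9) ∨ (b1 = b9 ∧ b9 = b10) ∨ (b1 = b10 ∧ b10 = b11) ∨ (b2 = b4 ∧ b4 = b8) ∨ (b2 = b5 ∧ b5 = b9) ∨ (b2 = b6 ∧ b6 = b10) ∨ (b2 = b7 ∧ b7 = b11) ∨ (b3 = b4 ∧ b4 = b9) ∨ (b3 = b5 ∧ b5 = b10) ∨ (b3 = b6 ∧ b6 = b11) := by decide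

set_option maxHeartbeats 4000000 in
/-- Proposition 8 (i): for all positive integers `a, x, d`, the set
`L₁(a,x,d) = {d, x, x+d, a, a+d, a+2d, a+3d, a+x, a+x+d, a+x+2d, a+x+3d}` is Schur. -/
theorem stmt8 (a x d : ℕ) (ha : 0 < a) (hx : 0 < x) (hd : 0 < d) :
    IsSchur ({d, x, x + d, a, a + d, a + 2 * d, a + 3 * d,
      a + x, a + x + d, a + x + 2 * d, a + x + 3 * d} : Set ℕ) := by
  intro f
  rcases schur_key (f d) (f x) (f (x + d)) (f a) (f (a + d)) (f (a + 2 * d))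
      (f (a + 3 * d)) (f (a + x)) (f (a + x + d)) (f (a + x + 2 * d))
      (f (a + x + 3 * d)) with
    ⟨h1, h2⟩|⟨h1, h2⟩|⟨h1, h2⟩|⟨h1, h2⟩|⟨h1, h2⟩|⟨h1, h2⟩|⟨h1, h2⟩|⟨h1, h2⟩|⟨h1, h2⟩|⟨h1, h2⟩|⟨h1, h2⟩|⟨h1, h2⟩|⟨h1, h2⟩|⟨h1, h2⟩
  · exact ⟨d, by simp, x, by simp, x + d, by simp, h1, h2, by ring⟩
  · exact ⟨d, by simp, a, by simp, a + d, by simp, h1, h2, by ring⟩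
  · exact ⟨d, by simp, a + d, by simp, a + 2 * d, by simp, h1, h2, by ring⟩
  · exact ⟨d, by simp, a + 2 * d, by simp, a + 3 * d, by simp, h1, h2, by ring⟩
  · exact ⟨d, by simp, a + x, by simp, a + x + d, by simp, h1, h2, by ring⟩
  · exact ⟨d, by simp, a + x + d, by simp, a + x + 2 * d, by simp, h1, h2, by ring⟩
  · exact ⟨d, by simp, a + x + 2 * d, by simp, a + x + 3 * d, by simp, h1, h2, by ring⟩
  · exact ⟨x, by simp, a, by simp, a + x, by simp, h1, h2, by ring⟩
  · exact ⟨x, by simp, a + d, by simp, a + x + d, by simp, h1, h2, by ring⟩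
  · exact ⟨x, by simp, a + 2 * d, by simp, a + x + 2 * d, by simp, h1, h2, by ring⟩
  · exact ⟨x, by simp, a + 3 * d, by simp, a + x + 3 * d, by simp, h1, h2, by ring⟩
  · exact ⟨x + d, by simp, a, by simp, a + x + d, by simp, h1, h2, by ring⟩
  · exact ⟨x + d, by simp, a + d, by simp, a + x + 2 * d, by simp, h1, h2, by ring⟩
  · exact ⟨x + d, by simp, a + 2 * d, by simp, a + x + 3 * d, by simp, h1, h2, by ring⟩
end

section
/- For all positive integers a, x, d, the set of integers L₂(a,x,d) = {d, x−d, x, a, a+d, a+2d, a+3d, x−a−3d, x−a−2d, x−a−d, x−a} ⊆ ℤ is Schur (elements of L₂(a,x,d) are computed in ℤ and may be negative or zero). -/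
set_option synthInstance.maxSize 4000 in
set_option maxRecDepth 10000 in
set_option maxHeartbeats 4000000 in
lemma bool_cases : ∀ b0 b1 b2 b3 b4 b5 b6 b7 b8 b9 b10 : Bool,
    (b0 = b1 ∧ b1 = b2) ∨ (b0 = b3 ∧ b3 = b4) ∨ (b0 = b4 ∧ b4 = b5) ∨
    (b0 = b5 ∧ b5 = b6) ∨ (b0 = b7 ∧ b7 = b8) ∨ (b0 = b8 ∧ b8 = b9) ∨
    (b0 = b9 ∧ b9 = b10) ∨ (b3 = b10 ∧ b10 = b2) ∨ (b4 = b9 ∧ b9 = b2) ∨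
    (b5 = b8 ∧ b8 = b2) ∨ (b6 = b7 ∧ b7 = b2) ∨ (b3 = b9 ∧ b9 = b1) ∨
    (b4 = b8 ∧ b8 = b1) ∨ (b5 = b7 ∧ b7 = b1) := by decide

set_option maxHeartbeats 4000000 in
/-- Proposition 8 (ii): for all positive integers `a, x, d`, the set of
integers `L₂(a,x,d) = {d, x−d, x, a, a+d, a+2d, a+3d, x−a−3d, x−a−2d, x−a−d, x−a} ⊆ ℤ`
is Schur (its elements are computed in `ℤ` and may be negative or zero). -/
theorem stmt9 (a x d : ℤ) (ha : 0 < a) (hx : 0 < x) (hd : 0 < d) :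
    IsSchur ({d, x - d, x, a, a + d, a + 2 * d, a + 3 * d,
      x - a - 3 * d, x - a - 2 * d, x - a - d, x - a} : Set ℤ) := by
  intro f
  rcases bool_cases (f d) (f (x - d)) (f x) (f a) (f (a + d)) (f (a + 2 * d))
      (f (a + 3 * d)) (f (x - a - 3 * d)) (f (x - a - 2 * d)) (f (x - a - d))
      (f (x - a)) with
    ⟨h1, h2⟩ | ⟨h1, h2⟩ | ⟨h1, h2⟩ | ⟨h1, h2⟩ | ⟨h1, h2⟩ | ⟨h1, h2⟩ | ⟨h1, h2⟩ |
    ⟨h1, h2⟩ | ⟨h1, h2⟩ | ⟨h1, h2⟩ | ⟨h1, h2⟩ | ⟨h1, h2⟩ | ⟨h1, h2⟩ | ⟨h1, h2⟩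
  · exact ⟨d, by simp, x - d, by simp, x, by simp, h1, h2, by ring⟩
  · exact ⟨d, by simp, a, by simp, a + d, by simp, h1, h2, by ring⟩
  · exact ⟨d, by simp, a + d, by simp, a + 2 * d, by simp, h1, h2, by ring⟩
  · exact ⟨d, by simp, a + 2 * d, by simp, a + 3 * d, by simp, h1, h2, by ring⟩
  · exact ⟨d, by simp, x - a - 3 * d, by simp, x - a - 2 * d, by simp, h1, h2, by ring⟩
  · exact ⟨d, by simp, x - a - 2 * d, by simp, x - a - d, by simp, h1, h2, by ring⟩
  · exact ⟨d, by simp, x - a - d, by simp, x - a, by simp, h1, h2, by ring⟩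
  · exact ⟨a, by simp, x - a, by simp, x, by simp, h1, h2, by ring⟩
  · exact ⟨a + d, by simp, x - a - d, by simp, x, by simp, h1, h2, by ring⟩
  · exact ⟨a + 2 * d, by simp, x - a - 2 * d, by simp, x, by simp, h1, h2, by ring⟩
  · exact ⟨a + 3 * d, by simp, x - a - 3 * d, by simp, x, by simp, h1, h2, by ring⟩
  · exact ⟨a, by simp, x - a - d, by simp, x - d, by simp, h1, h2, by ring⟩
  · exact ⟨a + d, by simp, x - a - 2 * d, by simp, x - d, by simp, h1, h2, by ring⟩
  · exact ⟨a + 2 * d, by simp, x - a - 3 * d, by simp, x - d, by simp, h1, h2, by ring⟩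
end

section
/- Let n and s be positive integers with s ≤ ⌊n/2⌋, let A_s = {n−s+1,…,n}, and let P ⊆ [n−s]. Suppose that there is no colouring of A_s ∪ P with A_s blue that is proper for H_Schur(A_s ∪ P), and let H_min be a family of edges of H_Schur(A_s ∪ P), minimal under inclusion, such that there is no colouring of A_s ∪ P with A_s blue that is proper for H_min. Then: (i) every edge h ∈ H_min contains at least one element of P; (ii) for every h ∈ H_min and every x ∈ h ∩ P there is an edge h′ ∈ H_min with h ∩ h′ = {x}; and (iii) if moreover h ∩ A_s ≠ ∅, then such an edge h′ can be chosen with h′ ∩ A_s = ∅. -/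
/-- The edges of the Schur hypergraph `H_Schur(X)`: subsets of `X` hosting a Schur triple,
i.e. sets of the form `{x, y, x + y}` contained in `X` (such sets have 2 or 3 elements). -/
def SchurEdges (X : Finset ℕ) : Set (Finset ℕ) :=
  {e | e ⊆ X ∧ ∃ x y : ℕ, e = {x, y, x + y}}

/-- There is a colouring with all of `As` blue (`true` = blue) that is proper for the
edge family `H`, i.e. no edge of `H` is monochromatic. -/
def HasProperBlue (As : Finset ℕ) (H : Set (Finset ℕ)) : Prop :=
  ∃ f : ℕ → Bool, (∀ a ∈ As, f a = true) ∧
    ∀ e ∈ H, ∃ u ∈ e, ∃ v ∈ e, f u ≠ f v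

/-- Lemma 15: let `s ≤ ⌊n/2⌋`, `A_s = {n-s+1, …, n}`, `P ⊆ [n-s]`.
Suppose no colouring of `A_s ∪ P` with `A_s` blue is proper for `H_Schur(A_s ∪ P)` and
`H_min` is an inclusion-minimal family of edges of `H_Schur(A_s ∪ P)` with this property.
Then every edge `h ∈ H_min` meets `P`, for every `x ∈ h ∩ P` there is `h' ∈ H_min` with
`h ∩ h' = {x}`, and if `h` meets `A_s`, such `h'` can be chosen disjoint from `A_s`. -/
theorem stmt11 (n s : ℕ) (hs : 1 ≤ s) (hsn : s ≤ n / 2)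
    (P : Finset ℕ) (hP : P ⊆ Finset.Icc 1 (n - s))
    (Hmin : Set (Finset ℕ))
    (hno : ¬ HasProperBlue (Finset.Icc (n - s + 1) n)
      (SchurEdges (Finset.Icc (n - s + 1) n ∪ P)))
    (hsub : Hmin ⊆ SchurEdges (Finset.Icc (n - s + 1) n ∪ P))
    (hnoMin : ¬ HasProperBlue (Finset.Icc (n - s + 1) n) Hmin)
    (hminimal : ∀ H' ⊆ Hmin, H' ≠ Hmin →
      HasProperBlue (Finset.Icc (n - s + 1) n) H') :
    ∀ h ∈ Hmin,
      (∃ x ∈ h, x ∈ P) ∧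
      ∀ x ∈ h, x ∈ P →
        (∃ h' ∈ Hmin, h ∩ h' = {x}) ∧
        ((∃ a ∈ h, a ∈ Finset.Icc (n - s + 1) n) →
          ∃ h' ∈ Hmin, h ∩ h' = {x} ∧ ∀ b ∈ h', b ∉ Finset.Icc (n - s + 1) n) := by
  intro h hh
  obtain ⟨hhX, a, b, hab⟩ := hsub hh
  have hdisj : ∀ x ∈ P, x ∉ Finset.Icc (n - s + 1) n := by
    intro x hx hxA
    have h1 := hP hx
    simp only [Finset.mem_Icc] at h1 hxA
    omega
  -- Part (i): h meets P
  have part1 : ∃ x ∈ h, x ∈ P := by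
    by_contra hc
    push_neg at hc
    have hsubAs : ∀ y ∈ h, y ∈ Finset.Icc (n - s + 1) n := by
      intro y hy
      rcases Finset.mem_union.1 (hhX hy) with h1 | h1
      · exact h1
      · exact absurd h1 (hc y hy)
    have ha := hsubAs a (by simp [hab])
    have hb := hsubAs b (by simp [hab])
    have hab2 := hsubAs (a + b) (by simp [hab])
    simp only [Finset.mem_Icc] at ha hb hab2
    omega
  refine ⟨part1, ?_⟩
  intro x hxh hxP
  -- a proper colouring for Hmin \ {h}
  have hne : Hmin \ {h} ≠ Hmin := by
    intro he
    have : h ∈ Hmin \ {h} := by rw [he]; exact hh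
    simp at this
  obtain ⟨f, hfblue, hfprop⟩ := hminimal (Hmin \ {h}) Set.diff_subset hne
  -- h is monochromatic under f
  have hmono : ∀ u ∈ h, f u = f x := by
    by_contra hc
    push_neg at hc
    obtain ⟨u, hu, huf⟩ := hc
    apply hnoMin
    refine ⟨f, hfblue, fun e he => ?_⟩
    by_cases hee : e = h
    · subst hee; exact ⟨u, hu, x, hxh, huf⟩
    · exact hfprop e ⟨he, hee⟩
  set c := f x with hcdef
  set g : ℕ → Bool := fun y => if y = x then !c else f y with hg
  have hgblue : ∀ a' ∈ Finset.Icc (n - s + 1) n, g a' = true := by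
    intro a' ha'
    have hax : a' ≠ x := fun he => hdisj x hxP (he ▸ ha')
    simp [hg, hax, hfblue a' ha']
  have hex : ¬ ∀ e ∈ Hmin, ∃ u ∈ e, ∃ v ∈ e, g u ≠ g v := by
    intro hall
    exact hnoMin ⟨g, hgblue, hall⟩
  push_neg at hex
  obtain ⟨h', hh', hmono'⟩ := hex
  -- h has an element different from x
  have hb1 : 1 ≤ b := by
    have hbm := hhX (show b ∈ h by simp [hab])
    rcases Finset.mem_union.1 hbm with h1 | h1
    · simp only [Finset.mem_Icc] at h1; omega
    · have := hP h1; simp only [Finset.mem_Icc] at this; omega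
  have hyx : ∃ y ∈ h, y ≠ x := by
    by_cases hax : a = x
    · exact ⟨a + b, by simp [hab], by omega⟩
    · exact ⟨a, by simp [hab], hax⟩
  obtain ⟨y, hyh, hyne⟩ := hyx
  -- h' ≠ h since h is not monochromatic under g
  have hne' : h' ≠ h := by
    intro he; subst he
    have h1 := hmono' x hxh y hyh
    have h2 := hmono y hyh
    simp only [hg, if_pos rfl, if_neg hyne] at h1
    rw [h2] at h1
    exact absurd h1 (by simp)
  -- x ∈ h'
  have hxh' : x ∈ h' := by
    by_contra hxn
    obtain ⟨u, hu, v, hv, huv⟩ := hfprop h' ⟨hh', hne'⟩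
    have hu' : g u = f u := by
      simp [hg, show u ≠ x from fun e => hxn (e ▸ hu)]
    have hv' : g v = f v := by
      simp [hg, show v ≠ x from fun e => hxn (e ▸ hv)]
    exact huv (by rw [← hu', ← hv', hmono' u hu v hv])
  -- the intersection is exactly {x}
  have hint : h ∩ h' = {x} := by
    ext z
    simp only [Finset.mem_inter, Finset.mem_singleton]
    constructor
    · rintro ⟨hz1, hz2⟩
      by_contra hzx
      have h1 := hmono' z hz2 x hxh'
      have h2 := hmono z hz1
      simp only [hg, if_neg hzx, if_pos rfl] at h1
      rw [h2] at h1
      exact absurd h1 (by simp)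
    · rintro rfl; exact ⟨hxh, hxh'⟩
  refine ⟨⟨h', hh', hint⟩, ?_⟩
  -- Part (iii)
  rintro ⟨a0, ha0h, ha0A⟩
  refine ⟨h', hh', hint, ?_⟩
  intro b0 hb0 hb0A
  have hctrue : c = true := by
    have h2 := hmono a0 ha0h
    rw [hfblue a0 ha0A] at h2
    exact h2.symm
  have hb0x : b0 ≠ x := fun e => hdisj x hxP (e ▸ hb0A)
  have h1 := hmono' b0 hb0 x hxh'
  simp only [hg, if_neg hb0x, if_pos rfl] at h1
  rw [hfblue b0 hb0A, hctrue] at h1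
  simp at h1
end

section
/- Let c > 0, let s = s(n) be positive integers with c·n^{1/2} ≤ s(n) ≤ n/2, let p = p(n) ∈ [0,1] with p = o((n·s(n))^{−1/3}), and let P be the random subset [n−s(n)]_{p(n)}. Then with high probability the following holds: if there is no colouring of A_{s(n)} ∪ P with A_{s(n)} blue that is proper for H_Schur(A_{s(n)} ∪ P), then every inclusion-minimal family H_min of edges of H_Schur(A_{s(n)} ∪ P) for which no colouring of A_{s(n)} ∪ P with A_{s(n)} blue is proper satisfies: (a) every edge of H_min has exactly three elements; (b) every edge of H_min contains at most one element of A_{s(n)}; (c) any two distinct edges of H_min intersect in at most one element. -/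
open Filter

set_option maxHeartbeats 1600000
namespace Stmt12Aux

lemma sum_weight (p : ℝ) (s : Finset ℕ) :
    ∑ S ∈ s.powerset, p ^ S.card * (1 - p) ^ (s.card - S.card) = 1 := by
  have h := Finset.prod_add (fun _ : ℕ => p) (fun _ : ℕ => 1 - p) s
  have h2 : ∀ t ∈ s.powerset,
      (∏ _i ∈ t, p) * ∏ _i ∈ s \ t, (1 - p)
        = p ^ t.card * (1 - p) ^ (s.card - t.card) := by
    intro t ht
    rw [Finset.prod_const, Finset.prod_const,
      Finset.card_sdiff_of_subset (Finset.mem_powerset.1 ht)]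
  rw [Finset.sum_congr rfl h2] at h
  rw [← h]
  simp

lemma weight_nonneg {p : ℝ} (hp : p ∈ Set.Icc (0:ℝ) 1) (m : ℕ) (S : Finset ℕ) :
    0 ≤ p ^ S.card * (1 - p) ^ (m - S.card) :=
  mul_nonneg (pow_nonneg hp.1 _) (pow_nonneg (by
    have := hp.2; linarith) _)

lemma randProb_univ (m : ℕ) (p : ℝ) : randProb m p Set.univ = 1 := by
  unfold randProb
  simp only [Set.indicator_univ]
  have := sum_weight p (Finset.Icc 1 m)
  rwa [Nat.card_Icc, Nat.add_sub_cancel] at this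

lemma randProb_nonneg {p : ℝ} (hp : p ∈ Set.Icc (0:ℝ) 1) (m : ℕ) (E : Set (Finset ℕ)) :
    0 ≤ randProb m p E := by
  refine Finset.sum_nonneg fun S _ => ?_
  exact Set.indicator_nonneg (fun T _ => weight_nonneg hp m T) S

lemma randProb_add_compl (m : ℕ) (p : ℝ) (E : Set (Finset ℕ)) :
    randProb m p E + randProb m p Eᶜ = 1 := by
  classical
  unfold randProb
  rw [← Finset.sum_add_distrib]
  have h : ∀ S ∈ (Finset.Icc 1 m).powerset,
      E.indicator (fun T => p ^ T.card * (1 - p) ^ (m - T.card)) S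
        + Eᶜ.indicator (fun T => p ^ T.card * (1 - p) ^ (m - T.card)) S
        = p ^ S.card * (1 - p) ^ (m - S.card) := by
    intro S _
    by_cases hS : S ∈ E
    · rw [Set.indicator_of_mem hS, Set.indicator_of_notMem (by simpa using hS), add_zero]
    · rw [Set.indicator_of_notMem hS, Set.indicator_of_mem (by simpa using hS), zero_add]
  rw [Finset.sum_congr rfl h]
  have := sum_weight p (Finset.Icc 1 m)
  rwa [Nat.card_Icc, Nat.add_sub_cancel] at this

lemma randProb_mono {p : ℝ} (hp : p ∈ Set.Icc (0:ℝ) 1) (m : ℕ) {E F : Set (Finset ℕ)}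
    (h : ∀ S : Finset ℕ, S ⊆ Finset.Icc 1 m → S ∈ E → S ∈ F) :
    randProb m p E ≤ randProb m p F := by
  classical
  refine Finset.sum_le_sum fun S hS => ?_
  by_cases hSE : S ∈ E
  · rw [Set.indicator_of_mem hSE,
      Set.indicator_of_mem (h S (Finset.mem_powerset.1 hS) hSE)]
  · rw [Set.indicator_of_notMem hSE]
    exact Set.indicator_nonneg (fun T _ => weight_nonneg hp m T) S

lemma randProb_le_one {p : ℝ} (hp : p ∈ Set.Icc (0:ℝ) 1) (m : ℕ) (E : Set (Finset ℕ)) :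
    randProb m p E ≤ 1 := by
  have := randProb_mono hp m (E := E) (F := Set.univ) (fun S _ _ => trivial)
  rwa [randProb_univ] at this

lemma randProb_upset {p : ℝ} (hp : p ∈ Set.Icc (0:ℝ) 1) (m : ℕ) (T : Finset ℕ)
    (hT : T ⊆ Finset.Icc 1 m) :
    randProb m p {S : Finset ℕ | T ⊆ S} = p ^ T.card := by
  classical
  unfold randProb
  have hind : ∀ S ∈ (Finset.Icc 1 m).powerset,
      ({S : Finset ℕ | T ⊆ S}).indicator
        (fun T' => p ^ T'.card * (1 - p) ^ (m - T'.card)) S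
      = if T ⊆ S then p ^ S.card * (1 - p) ^ (m - S.card) else 0 := by
    intro S _
    by_cases h : T ⊆ S
    · rw [Set.indicator_of_mem (by simpa using h), if_pos h]
    · rw [Set.indicator_of_notMem (by simpa using h), if_neg h]
  rw [Finset.sum_congr rfl hind, ← Finset.sum_filter]
  have key : ∑ S ∈ (Finset.Icc 1 m).powerset.filter (fun S => T ⊆ S),
      p ^ S.card * (1 - p) ^ (m - S.card)
      = ∑ S' ∈ ((Finset.Icc 1 m) \ T).powerset,
        p ^ T.card * (p ^ S'.card * (1 - p) ^ (((Finset.Icc 1 m) \ T).card - S'.card)) := by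
    refine Finset.sum_nbij' (fun S => S \ T) (fun S' => S' ∪ T) ?_ ?_ ?_ ?_ ?_
    · intro S hS
      simp only [Finset.mem_filter, Finset.mem_powerset] at hS
      exact Finset.mem_powerset.2 (Finset.sdiff_subset_sdiff hS.1 le_rfl)
    · intro S' hS'
      simp only [Finset.mem_powerset] at hS'
      refine Finset.mem_filter.2 ⟨Finset.mem_powerset.2 ?_, Finset.subset_union_right⟩
      exact Finset.union_subset (hS'.trans Finset.sdiff_subset) hT
    · intro S hS
      simp only [Finset.mem_filter, Finset.mem_powerset] at hS
      exact Finset.sdiff_union_of_subset hS.2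
    · intro S' hS'
      simp only [Finset.mem_powerset] at hS'
      have hdisj : Disjoint S' T := by
        refine Finset.disjoint_left.2 fun a haS' haT => ?_
        have := hS' haS'
        exact (Finset.mem_sdiff.1 this).2 haT
      show (S' ∪ T) \ T = S'
      rw [Finset.union_sdiff_right]
      exact Finset.sdiff_eq_self_of_disjoint hdisj
    · intro S hS
      simp only [Finset.mem_filter, Finset.mem_powerset] at hS
      have hcard : (S \ T).card + T.card = S.card :=
        Finset.card_sdiff_add_card_eq_card hS.2
      have hIcc : ((Finset.Icc 1 m) \ T).card + T.card = (Finset.Icc 1 m).card :=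
        Finset.card_sdiff_add_card_eq_card hT
      have hm : (Finset.Icc 1 m).card = m := by rw [Nat.card_Icc, Nat.add_sub_cancel]
      have hSle : S.card ≤ m := by
        rw [← hm]; exact Finset.card_le_card hS.1
      show p ^ S.card * (1 - p) ^ (m - S.card)
          = p ^ T.card * (p ^ (S \ T).card * (1 - p) ^ ((Finset.Icc 1 m \ T).card - (S \ T).card))
      rw [← mul_assoc, ← pow_add,
        show T.card + (S \ T).card = S.card from by omega,
        show (Finset.Icc 1 m \ T).card - (S \ T).card = m - S.card from by omega]
  rw [key, ← Finset.mul_sum, sum_weight, mul_one]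

lemma randProb_unionBound {p : ℝ} (hp : p ∈ Set.Icc (0:ℝ) 1) (m : ℕ)
    (𝒯 : Finset (Finset ℕ)) (h𝒯 : ∀ T ∈ 𝒯, T ⊆ Finset.Icc 1 m) :
    randProb m p {S : Finset ℕ | ∃ T ∈ 𝒯, T ⊆ S} ≤ ∑ T ∈ 𝒯, p ^ T.card := by
  classical
  have step1 : randProb m p {S : Finset ℕ | ∃ T ∈ 𝒯, T ⊆ S}
      ≤ ∑ T ∈ 𝒯, randProb m p {S : Finset ℕ | T ⊆ S} := by
    unfold randProb
    rw [Finset.sum_comm]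
    refine Finset.sum_le_sum fun S hS => ?_
    by_cases hSE : S ∈ {S : Finset ℕ | ∃ T ∈ 𝒯, T ⊆ S}
    · obtain ⟨T₀, hT₀, hT₀S⟩ := hSE
      rw [Set.indicator_of_mem (show S ∈ {S : Finset ℕ | ∃ T ∈ 𝒯, T ⊆ S} from ⟨T₀, hT₀, hT₀S⟩)]
      have h1 : p ^ S.card * (1 - p) ^ (m - S.card)
          = ({S : Finset ℕ | T₀ ⊆ S}).indicator
              (fun T' => p ^ T'.card * (1 - p) ^ (m - T'.card)) S :=
        (Set.indicator_of_mem (show S ∈ {S : Finset ℕ | T₀ ⊆ S} from hT₀S)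
          (fun T' => p ^ T'.card * (1 - p) ^ (m - T'.card))).symm
      rw [h1]
      exact Finset.single_le_sum
        (f := fun T => ({S : Finset ℕ | T ⊆ S}).indicator
          (fun T' => p ^ T'.card * (1 - p) ^ (m - T'.card)) S)
        (fun T _ => Set.indicator_nonneg (fun T' _ => weight_nonneg hp m T') S) hT₀
    · rw [Set.indicator_of_notMem hSE]
      exact Finset.sum_nonneg fun T _ =>
        Set.indicator_nonneg (fun T' _ => weight_nonneg hp m T') S
  refine step1.trans (Finset.sum_le_sum fun T hT => ?_)
  rw [randProb_upset hp m T (h𝒯 T hT)]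


lemma mem_X_bounds {n s : ℕ} {P : Finset ℕ} (hP : P ⊆ Finset.Icc 1 (n - s)) {w : ℕ}
    (hw : w ∈ Finset.Icc (n - s + 1) n ∪ P) : 1 ≤ w ∧ w ≤ n := by
  rcases Finset.mem_union.1 hw with h | h
  · have := Finset.mem_Icc.1 h; omega
  · have := Finset.mem_Icc.1 (hP h); omega

lemma mem_P_of_le {n s : ℕ} {P : Finset ℕ} (hP : P ⊆ Finset.Icc 1 (n - s)) {w : ℕ}
    (hw : w ∈ Finset.Icc (n - s + 1) n ∪ P) (h : w ≤ n - s) : w ∈ P := by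
  rcases Finset.mem_union.1 hw with h' | h'
  · have := Finset.mem_Icc.1 h'; omega
  · exact h'

lemma schur_canon {X : Finset ℕ} (hpos : ∀ w ∈ X, 1 ≤ w) {e : Finset ℕ}
    (he : e ∈ SchurEdges X) :
    ∃ x y : ℕ, 1 ≤ x ∧ x ≤ y ∧ e = {x, y, x + y} ∧ e ⊆ X := by
  obtain ⟨hsub, x, y, rfl⟩ := he
  have hx1 : 1 ≤ x := hpos x (hsub (by simp))
  have hy1 : 1 ≤ y := hpos y (hsub (by simp))
  rcases le_total x y with h | h
  · exact ⟨x, y, hx1, h, rfl, hsub⟩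
  · refine ⟨y, x, hy1, h, ?_, ?_⟩
    · ext w
      simp only [Finset.mem_insert, Finset.mem_singleton]
      omega
    · intro w hw
      apply hsub
      simp only [Finset.mem_insert, Finset.mem_singleton] at hw ⊢
      omega

lemma flip (n s : ℕ) (P : Finset ℕ)
    (hP : P ⊆ Finset.Icc 1 (n - s))
    (H2 : ∀ u : ℕ, 1 ≤ u → ¬ ({u, 2*u} : Finset ℕ) ⊆ P)
    (H3 : ∀ u v : ℕ, 1 ≤ u → 1 ≤ v → u ≠ v → ({u, v, u+v} : Finset ℕ) ⊆ P →
      ∀ w ∈ ({u, v, u+v} : Finset ℕ), ¬ (w < s ∨ (n - s < 2*w ∧ 2*w ≤ n)))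
    (Hmin : Set (Finset ℕ))
    (hsub : Hmin ⊆ SchurEdges (Finset.Icc (n - s + 1) n ∪ P))
    (hncol : ¬ HasProperBlue (Finset.Icc (n - s + 1) n) Hmin)
    (hmin : ∀ H' ⊆ Hmin, H' ≠ Hmin → HasProperBlue (Finset.Icc (n - s + 1) n) H')
    (e : Finset ℕ) (he : e ∈ Hmin) (x : ℕ) (hxe : x ∈ e) (hxm : x ≤ n - s)
    (hother : ∀ w ∈ e, w ≠ x → n - s < w)
    (hxcond : x < s ∨ (n - s < 2*x ∧ 2*x ≤ n))
    (hw : ∃ w ∈ e, w ≠ x) : False := by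
  have hne : Hmin \ {e} ≠ Hmin := by
    intro h
    have : e ∈ Hmin \ {e} := h.symm ▸ he
    exact this.2 rfl
  obtain ⟨f, hfA, hfprop⟩ := hmin (Hmin \ {e}) Set.diff_subset hne
  set g : ℕ → Bool := fun w => if w = x then false else f w with hg
  apply hncol
  refine ⟨g, ?_, ?_⟩
  · intro a ha
    have hax : a ≠ x := by
      have := Finset.mem_Icc.1 ha; omega
    simp only [hg, if_neg hax]
    exact hfA a ha
  · intro e' he'
    by_cases hee : e' = e
    · subst hee
      obtain ⟨w, hwe, hwx⟩ := hw
      refine ⟨x, hxe, w, hwe, ?_⟩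
      have hwb := mem_X_bounds hP ((hsub he).1 hwe)
      have hwbig := hother w hwe hwx
      have hwA : w ∈ Finset.Icc (n - s + 1) n := Finset.mem_Icc.2 ⟨by omega, hwb.2⟩
      have h1 : g x = false := by simp [hg]
      have h2 : g w = true := by
        simp only [hg, if_neg hwx]; exact hfA w hwA
      simp [h1, h2]
    · have he'' : e' ∈ Hmin \ {e} := ⟨he', hee⟩
      by_cases hxe' : x ∈ e'
      · by_cases hbig : ∃ w ∈ e', n - s < w
        · obtain ⟨w, hwe', hwbig⟩ := hbig
          have hwx : w ≠ x := by omega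
          have hwA : w ∈ Finset.Icc (n - s + 1) n :=
            Finset.mem_Icc.2 ⟨by omega, (mem_X_bounds hP ((hsub he').1 hwe')).2⟩
          refine ⟨x, hxe', w, hwe', ?_⟩
          have h1 : g x = false := by simp [hg]
          have h2 : g w = true := by
            simp only [hg, if_neg hwx]; exact hfA w hwA
          simp [h1, h2]
        · push_neg at hbig
          exfalso
          have he'P : e' ⊆ P := fun w hw' =>
            mem_P_of_le hP ((hsub he').1 hw') (hbig w hw')
          have hposX : ∀ w ∈ Finset.Icc (n - s + 1) n ∪ P, 1 ≤ w :=
            fun w hw' => (mem_X_bounds hP hw').1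
          obtain ⟨u, v, hu1, huv, he'eq, _⟩ := schur_canon hposX (hsub he')
          by_cases huv' : u = v
          · apply H2 u hu1
            intro w hw'
            apply he'P
            rw [he'eq]
            simp only [Finset.mem_insert, Finset.mem_singleton] at hw' ⊢
            omega
          · exact H3 u v hu1 (hu1.trans huv) huv' (he'eq ▸ he'P) x (he'eq ▸ hxe') hxcond
      · obtain ⟨u, hu, v, hv, huvne⟩ := hfprop e' he''
        refine ⟨u, hu, v, hv, ?_⟩
        have hux : u ≠ x := fun h => hxe' (h ▸ hu)
        have hvx : v ≠ x := fun h => hxe' (h ▸ hv)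
        have h1 : g u = f u := by simp only [hg]; rw [if_neg hux]
        have h2 : g v = f v := by simp only [hg]; rw [if_neg hvx]
        rw [h1, h2]; exact huvne


lemma overlap_mixed (n s : ℕ) (P : Finset ℕ)
    (H5 : ∀ x y : ℕ, 1 ≤ x → x < y → n - s < x + y → x + y ≤ n →
      ¬ ({x, y, y - x} : Finset ℕ) ⊆ P)
    (x y x' y' a b : ℕ) (hx1 : 1 ≤ x) (hxy : x < y) (hym : y ≤ n - s)
    (hzn : x + y ≤ n) (hz : n - s < x + y)
    (hx1' : 1 ≤ x') (hxy' : x' < y') (hz' : x' + y' ≤ n - s)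
    (he'P : ({x', y', x' + y'} : Finset ℕ) ⊆ P)
    (ha1 : a = x ∨ a = y ∨ a = x + y) (ha2 : a = x' ∨ a = y' ∨ a = x' + y')
    (hb1 : b = x ∨ b = y ∨ b = x + y) (hb2 : b = x' ∨ b = y' ∨ b = x' + y')
    (hab : a ≠ b) : False := by
  have hkey : (x = x' ∧ y = x' + y' ∧ y - x = y') ∨
      (x = y' ∧ y = x' + y' ∧ y - x = x') := by omega
  apply H5 x y hx1 hxy hz hzn
  intro w hw'
  apply he'P
  simp only [Finset.mem_insert, Finset.mem_singleton] at hw' ⊢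
  omega

lemma deterministic (n s : ℕ) (P : Finset ℕ) (hs1 : 1 ≤ s) (hsn : 2 * s ≤ n)
    (hP : P ⊆ Finset.Icc 1 (n - s))
    (H2 : ∀ u : ℕ, 1 ≤ u → ¬ ({u, 2*u} : Finset ℕ) ⊆ P)
    (H3 : ∀ u v : ℕ, 1 ≤ u → 1 ≤ v → u ≠ v → ({u, v, u+v} : Finset ℕ) ⊆ P →
      ∀ w ∈ ({u, v, u+v} : Finset ℕ), ¬ (w < s ∨ (n - s < 2*w ∧ 2*w ≤ n)))
    (H4 : ∀ u v u' v' : ℕ, u ≠ v → u' ≠ v' → ({u,v,u+v} : Finset ℕ) ⊆ P →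
      ({u',v',u'+v'} : Finset ℕ) ⊆ P →
      ({u,v,u+v} : Finset ℕ) ≠ ({u',v',u'+v'} : Finset ℕ) →
      (({u,v,u+v} : Finset ℕ) ∩ ({u',v',u'+v'} : Finset ℕ)).card ≤ 1)
    (H5 : ∀ x y : ℕ, 1 ≤ x → x < y → n - s < x + y → x + y ≤ n →
      ¬ ({x, y, y - x} : Finset ℕ) ⊆ P) :
    ¬ HasProperBlue (Finset.Icc (n - s + 1) n)
        (SchurEdges (Finset.Icc (n - s + 1) n ∪ P)) →
      ∀ Hmin : Set (Finset ℕ),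
        Hmin ⊆ SchurEdges (Finset.Icc (n - s + 1) n ∪ P) →
        ¬ HasProperBlue (Finset.Icc (n - s + 1) n) Hmin →
        (∀ H' ⊆ Hmin, H' ≠ Hmin →
          HasProperBlue (Finset.Icc (n - s + 1) n) H') →
        ((∀ e ∈ Hmin, e.card = 3) ∧
          (∀ e ∈ Hmin, (e ∩ Finset.Icc (n - s + 1) n).card ≤ 1) ∧
          (∀ e ∈ Hmin, ∀ e' ∈ Hmin, e ≠ e' → (e ∩ e').card ≤ 1)) := by
  intro _ Hmin hsub hncol hmin
  have hposX : ∀ w ∈ Finset.Icc (n - s + 1) n ∪ P, 1 ≤ w :=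
    fun w hw' => (mem_X_bounds hP hw').1
  have claim : ∀ e ∈ Hmin, ∃ x y : ℕ, 1 ≤ x ∧ x < y ∧ y ≤ n - s ∧ x + y ≤ n ∧
      e = {x, y, x + y} := by
    intro e he
    obtain ⟨x, y, hx1, hxy, heq, hsubX⟩ := schur_canon hposX (hsub he)
    have hxe : x ∈ e := by rw [heq]; simp
    have hye : y ∈ e := by rw [heq]; simp
    have hze : x + y ∈ e := by rw [heq]; simp
    have hxB := mem_X_bounds hP (hsubX hxe)
    have hyB := mem_X_bounds hP (hsubX hye)
    have hzB := mem_X_bounds hP (hsubX hze)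
    have hxm : x ≤ n - s := by omega
    have hxlty : x < y := by
      rcases eq_or_lt_of_le hxy with heq2 | h
      · exfalso
        subst heq2
        by_cases h2 : x + x ≤ n - s
        · apply H2 x hx1
          have hxP : x ∈ P := mem_P_of_le hP (hsubX hxe) hxm
          have hzP : x + x ∈ P := mem_P_of_le hP (hsubX hze) h2
          intro w hw'
          simp only [Finset.mem_insert, Finset.mem_singleton] at hw'
          rcases hw' with rfl | rfl
          · exact hxP
          · have h2x : 2 * x = x + x := by ring
            rw [h2x]; exact hzP
        · refine flip n s P hP H2 H3 Hmin hsub hncol hmin e he x hxe hxm ?_ ?_ ?_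
          · intro w hwe hwx
            rw [heq] at hwe
            simp only [Finset.mem_insert, Finset.mem_singleton] at hwe
            omega
          · right; omega
          · exact ⟨x + x, hze, by omega⟩
      · exact h
    have hym : y ≤ n - s := by
      by_contra hc
      refine flip n s P hP H2 H3 Hmin hsub hncol hmin e he x hxe hxm ?_ ?_ ?_
      · intro w hwe hwx
        rw [heq] at hwe
        simp only [Finset.mem_insert, Finset.mem_singleton] at hwe
        omega
      · left; omega
      · exact ⟨y, hye, by omega⟩
    exact ⟨x, y, hx1, hxlty, hym, hzB.2, heq⟩
  refine ⟨?_, ?_, ?_⟩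
  · intro e he
    obtain ⟨x, y, hx1, hxy, hym, hzn, heq⟩ := claim e he
    exact Finset.card_eq_three.2 ⟨x, y, x + y, by omega, by omega, by omega, heq⟩
  · intro e he
    obtain ⟨x, y, hx1, hxy, hym, hzn, heq⟩ := claim e he
    rw [Finset.card_le_one]
    intro a ha b hb
    rw [heq] at ha hb
    simp only [Finset.mem_inter, Finset.mem_insert, Finset.mem_singleton,
      Finset.mem_Icc] at ha hb
    omega
  · intro e he e' he' hne
    by_contra hc
    push_neg at hc
    obtain ⟨a, ha, b, hb, hab⟩ := Finset.one_lt_card.1 hc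
    obtain ⟨x, y, hx1, hxy, hym, hzn, heq⟩ := claim e he
    obtain ⟨x', y', hx1', hxy', hym', hzn', heq'⟩ := claim e' he'
    rw [heq, heq'] at ha hb
    simp only [Finset.mem_inter, Finset.mem_insert, Finset.mem_singleton] at ha hb
    by_cases hz : x + y ≤ n - s
    · by_cases hz' : x' + y' ≤ n - s
      · -- both inside P : use H4
        have heP : ({x, y, x + y} : Finset ℕ) ⊆ P := by
          intro w hw'
          apply mem_P_of_le hP ((hsub he).1 (heq ▸ hw'))
          simp only [Finset.mem_insert, Finset.mem_singleton] at hw'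
          omega
        have heP' : ({x', y', x' + y'} : Finset ℕ) ⊆ P := by
          intro w hw'
          apply mem_P_of_le hP ((hsub he').1 (heq' ▸ hw'))
          simp only [Finset.mem_insert, Finset.mem_singleton] at hw'
          omega
        have h4 := H4 x y x' y' (by omega) (by omega) heP heP'
          (by rw [← heq, ← heq']; exact hne)
        rw [← heq, ← heq'] at h4
        omega
      · -- e ⊆ P, e' has big sum: mixed, swap roles
        have heP : ({x, y, x + y} : Finset ℕ) ⊆ P := by
          intro w hw'
          apply mem_P_of_le hP ((hsub he).1 (heq ▸ hw'))
          simp only [Finset.mem_insert, Finset.mem_singleton] at hw'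
          omega
        exact overlap_mixed n s P H5 x' y' x y a b hx1' hxy' hym'
          (by omega) (by omega) hx1 hxy (by omega) heP ha.2 ha.1 hb.2 hb.1 hab
    · by_cases hz' : x' + y' ≤ n - s
      · have heP' : ({x', y', x' + y'} : Finset ℕ) ⊆ P := by
          intro w hw'
          apply mem_P_of_le hP ((hsub he').1 (heq' ▸ hw'))
          simp only [Finset.mem_insert, Finset.mem_singleton] at hw'
          omega
        exact overlap_mixed n s P H5 x y x' y' a b hx1 hxy hym
          (by omega) (by omega) hx1' hxy' (by omega) heP' ha.1 ha.2 hb.1 hb.2 hab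
      · -- both sums big : T1/T1, edges must coincide
        have hxx' : x = x' ∧ y = y' := by omega
        apply hne
        rw [heq, heq', hxx'.1, hxx'.2]


/-- degenerate pairs `{u,2u}` -/
def pat2 (n s : ℕ) : Finset (Finset ℕ) :=
  ((Finset.Icc 1 (n - s)).image (fun u => ({u, 2*u} : Finset ℕ))).filter
    (fun T => T ⊆ Finset.Icc 1 (n - s) ∧ T.card = 2)

def patL (n s : ℕ) : Finset ℕ :=
  (Finset.Icc 1 n).filter (fun w => w < s ∨ (n - s < 2*w ∧ 2*w ≤ n))

def pat3 (n s : ℕ) : Finset (Finset ℕ) :=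
  (((patL n s) ×ˢ Finset.Icc 1 n).image
      (fun q => ({q.1, q.2, q.1 + q.2} : Finset ℕ)) ∪
   ((patL n s) ×ˢ Finset.Icc 1 n).image
      (fun q => ({q.2, q.1 - q.2, q.1} : Finset ℕ))).filter
    (fun T => T ⊆ Finset.Icc 1 (n - s) ∧ T.card = 3)

def pat4 (n s : ℕ) : Finset (Finset ℕ) :=
  (((Finset.Icc 1 (n-s)) ×ˢ (Finset.Icc 1 (n-s))).image
      (fun q => insert (q.2 - q.1) ({q.1, q.2, q.1 + q.2} : Finset ℕ)) ∪
   ((Finset.Icc 1 (n-s)) ×ˢ (Finset.Icc 1 (n-s))).image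
      (fun q => insert (2*q.1 + q.2) ({q.1, q.2, q.1 + q.2} : Finset ℕ))).filter
    (fun T => T ⊆ Finset.Icc 1 (n - s) ∧ T.card = 4)

def pat5 (n s : ℕ) : Finset (Finset ℕ) :=
  (((Finset.Icc 1 (n-s)) ×ˢ (Finset.Icc 1 s)).image
      (fun q => ({q.1, (n - s) + q.2 - q.1, ((n - s) + q.2 - q.1) - q.1} : Finset ℕ))).filter
    (fun T => T ⊆ Finset.Icc 1 (n - s) ∧ T.card = 3)

lemma pat2_sub (n s : ℕ) : ∀ T ∈ pat2 n s, T ⊆ Finset.Icc 1 (n - s) :=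
  fun T hT => ((Finset.mem_filter.1 hT).2).1
lemma pat3_sub (n s : ℕ) : ∀ T ∈ pat3 n s, T ⊆ Finset.Icc 1 (n - s) :=
  fun T hT => ((Finset.mem_filter.1 hT).2).1
lemma pat4_sub (n s : ℕ) : ∀ T ∈ pat4 n s, T ⊆ Finset.Icc 1 (n - s) :=
  fun T hT => ((Finset.mem_filter.1 hT).2).1
lemma pat5_sub (n s : ℕ) : ∀ T ∈ pat5 n s, T ⊆ Finset.Icc 1 (n - s) :=
  fun T hT => ((Finset.mem_filter.1 hT).2).1

lemma pat2_card (n s : ℕ) : (pat2 n s).card ≤ n :=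
  le_trans (Finset.card_filter_le _ _) (le_trans (Finset.card_image_le)
    (by rw [Nat.card_Icc]; omega))

lemma patL_card (n s : ℕ) (hs1 : 1 ≤ s) (hsn : 2*s ≤ n) : (patL n s).card ≤ 2*s := by
  have hsub : patL n s ⊆ Finset.Icc 1 (s-1) ∪ Finset.Icc ((n-s)/2 + 1) (n/2) := by
    intro w hw
    obtain ⟨hw1, hw2⟩ := Finset.mem_filter.1 hw
    rw [Finset.mem_Icc] at hw1
    rw [Finset.mem_union, Finset.mem_Icc, Finset.mem_Icc]
    omega
  calc (patL n s).card ≤ _ := Finset.card_le_card hsub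
    _ ≤ (Finset.Icc 1 (s-1)).card + (Finset.Icc ((n-s)/2 + 1) (n/2)).card :=
        Finset.card_union_le _ _
    _ ≤ 2*s := by rw [Nat.card_Icc, Nat.card_Icc]; omega

lemma pat3_card (n s : ℕ) (hs1 : 1 ≤ s) (hsn : 2*s ≤ n) : (pat3 n s).card ≤ 4*s*n := by
  have h1 : ((patL n s) ×ˢ Finset.Icc 1 n).card ≤ 2*s*n := by
    rw [Finset.card_product, Nat.card_Icc]
    have := patL_card n s hs1 hsn
    have hn : n + 1 - 1 = n := by omega
    rw [hn]
    exact Nat.mul_le_mul_right n this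
  calc (pat3 n s).card ≤ _ := Finset.card_filter_le _ _
    _ ≤ _ := Finset.card_union_le _ _
    _ ≤ 2*s*n + 2*s*n := add_le_add (le_trans Finset.card_image_le h1)
        (le_trans Finset.card_image_le h1)
    _ ≤ 4*s*n := le_of_eq (by ring)

lemma pat4_card (n s : ℕ) : (pat4 n s).card ≤ 2*n*n := by
  have h1 : ((Finset.Icc 1 (n-s)) ×ˢ (Finset.Icc 1 (n-s))).card ≤ n*n := by
    rw [Finset.card_product, Nat.card_Icc]
    exact Nat.mul_le_mul (by omega) (by omega)
  calc (pat4 n s).card ≤ _ := Finset.card_filter_le _ _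
    _ ≤ _ := Finset.card_union_le _ _
    _ ≤ n*n + n*n := add_le_add (le_trans Finset.card_image_le h1)
        (le_trans Finset.card_image_le h1)
    _ ≤ 2*n*n := le_of_eq (by ring)

lemma pat5_card (n s : ℕ) : (pat5 n s).card ≤ n*s := by
  calc (pat5 n s).card ≤ _ := Finset.card_filter_le _ _
    _ ≤ _ := Finset.card_image_le
    _ ≤ n*s := by
        rw [Finset.card_product, Nat.card_Icc, Nat.card_Icc]
        exact Nat.mul_le_mul (by omega) (by omega)

lemma sum_pat_le {p : ℝ} (hp : 0 ≤ p) (𝒯 : Finset (Finset ℕ)) (k : ℕ)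
    (hk : ∀ T ∈ 𝒯, T.card = k) : ∑ T ∈ 𝒯, p ^ T.card ≤ (𝒯.card : ℝ) * p ^ k := by
  rw [Finset.sum_congr rfl (fun T hT => by rw [hk T hT])]
  rw [Finset.sum_const, nsmul_eq_mul]

lemma coverage2 (n s : ℕ) (S : Finset ℕ) (hS : S ⊆ Finset.Icc 1 (n - s))
    (h2 : ∀ T ∈ pat2 n s, ¬ T ⊆ S) :
    ∀ u : ℕ, 1 ≤ u → ¬ ({u, 2*u} : Finset ℕ) ⊆ S := by
  intro u hu hsub2
  refine h2 {u, 2*u} ?_ hsub2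
  refine Finset.mem_filter.2 ⟨?_, hsub2.trans hS, ?_⟩
  · exact Finset.mem_image.2 ⟨u, hS (hsub2 (show u ∈ ({u,2*u}:Finset ℕ) by simp)), rfl⟩
  · rw [Finset.card_insert_of_notMem (by simp; omega), Finset.card_singleton]

lemma coverage3 (n s : ℕ) (S : Finset ℕ) (hS : S ⊆ Finset.Icc 1 (n - s))
    (h3 : ∀ T ∈ pat3 n s, ¬ T ⊆ S) :
    ∀ u v : ℕ, 1 ≤ u → 1 ≤ v → u ≠ v → ({u, v, u+v} : Finset ℕ) ⊆ S →
      ∀ w ∈ ({u, v, u+v} : Finset ℕ), ¬ (w < s ∨ (n - s < 2*w ∧ 2*w ≤ n)) := by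
  intro u v hu hv huv hsub3 w hw hcond
  have hwS : w ∈ Finset.Icc 1 (n - s) := hS (hsub3 hw)
  rw [Finset.mem_Icc] at hwS
  have hwL : w ∈ patL n s :=
    Finset.mem_filter.2 ⟨Finset.mem_Icc.2 ⟨by omega, by omega⟩, hcond⟩
  have huS := Finset.mem_Icc.1 (hS (hsub3 (show u ∈ ({u,v,u+v}:Finset ℕ) by simp)))
  have hvS := Finset.mem_Icc.1 (hS (hsub3 (show v ∈ ({u,v,u+v}:Finset ℕ) by simp)))
  refine h3 {u, v, u+v} ?_ hsub3
  refine Finset.mem_filter.2 ⟨?_, hsub3.trans hS,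
    Finset.card_eq_three.2 ⟨u, v, u+v, by omega, by omega, by omega, rfl⟩⟩
  rw [Finset.mem_union]
  simp only [Finset.mem_insert, Finset.mem_singleton] at hw
  rcases hw with rfl | rfl | rfl
  · left
    exact Finset.mem_image.2 ⟨(w, v),
      Finset.mem_product.2 ⟨hwL, Finset.mem_Icc.2 ⟨by omega, by omega⟩⟩, rfl⟩
  · left
    refine Finset.mem_image.2 ⟨(w, u),
      Finset.mem_product.2 ⟨hwL, Finset.mem_Icc.2 ⟨by omega, by omega⟩⟩, ?_⟩
    ext a
    simp only [Finset.mem_insert, Finset.mem_singleton]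
    omega
  · right
    refine Finset.mem_image.2 ⟨(u + v, u),
      Finset.mem_product.2 ⟨hwL, Finset.mem_Icc.2 ⟨by omega, by omega⟩⟩, ?_⟩
    ext a
    simp only [Finset.mem_insert, Finset.mem_singleton]
    omega

lemma coverage4 (n s : ℕ) (S : Finset ℕ) (hS : S ⊆ Finset.Icc 1 (n - s))
    (h4 : ∀ T ∈ pat4 n s, ¬ T ⊆ S) :
    ∀ u v u' v' : ℕ, u ≠ v → u' ≠ v' → ({u,v,u+v} : Finset ℕ) ⊆ S →
      ({u',v',u'+v'} : Finset ℕ) ⊆ S →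
      ({u,v,u+v} : Finset ℕ) ≠ ({u',v',u'+v'} : Finset ℕ) →
      (({u,v,u+v} : Finset ℕ) ∩ ({u',v',u'+v'} : Finset ℕ)).card ≤ 1 := by
  intro u v u' v' huv huv' hT1 hT2 hne
  by_contra hcard
  push_neg at hcard
  obtain ⟨a, ha, b, hb, hab⟩ := Finset.one_lt_card.1 hcard
  have hu1 := Finset.mem_Icc.1 (hS (hT1 (show u ∈ ({u,v,u+v}:Finset ℕ) by simp)))
  have hv1 := Finset.mem_Icc.1 (hS (hT1 (show v ∈ ({u,v,u+v}:Finset ℕ) by simp)))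
  have hu1' := Finset.mem_Icc.1 (hS (hT2 (show u' ∈ ({u',v',u'+v'}:Finset ℕ) by simp)))
  have hv1' := Finset.mem_Icc.1 (hS (hT2 (show v' ∈ ({u',v',u'+v'}:Finset ℕ) by simp)))
  have hcard3 : ({u,v,u+v} : Finset ℕ).card = 3 :=
    Finset.card_eq_three.2 ⟨u, v, u+v, by omega, by omega, by omega, rfl⟩
  have hcard3' : ({u',v',u'+v'} : Finset ℕ).card = 3 :=
    Finset.card_eq_three.2 ⟨u', v', u'+v', by omega, by omega, by omega, rfl⟩
  have hd : ∃ d ∈ ({u',v',u'+v'} : Finset ℕ), d ∉ ({u,v,u+v} : Finset ℕ) := by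
    by_contra hdd
    push_neg at hdd
    exact hne ((Finset.eq_of_subset_of_card_le hdd (by omega)).symm)
  obtain ⟨d, hdT2, hdT1⟩ := hd
  have haT1 := (Finset.mem_inter.1 ha).1
  have haT2 := (Finset.mem_inter.1 ha).2
  have hbT1 := (Finset.mem_inter.1 hb).1
  have hbT2 := (Finset.mem_inter.1 hb).2
  have habd : ({a, b, d} : Finset ℕ) = {u',v',u'+v'} := by
    apply Finset.eq_of_subset_of_card_le
    · intro w hw
      simp only [Finset.mem_insert, Finset.mem_singleton] at hw
      rcases hw with rfl | rfl | rfl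
      · exact haT2
      · exact hbT2
      · exact hdT2
    · rw [hcard3']
      have : ({a, b, d} : Finset ℕ).card = 3 :=
        Finset.card_eq_three.2 ⟨a, b, d, hab,
          fun h => hdT1 (h ▸ haT1), fun h => hdT1 (h ▸ hbT1), rfl⟩
      omega
  have ha1 : a = u ∨ a = v ∨ a = u+v := by simpa using haT1
  have ha2 : a = u' ∨ a = v' ∨ a = u'+v' := by simpa using haT2
  have hb1 : b = u ∨ b = v ∨ b = u+v := by simpa using hbT1
  have hb2 : b = u' ∨ b = v' ∨ b = u'+v' := by simpa using hbT2
  have hd2 : d = u' ∨ d = v' ∨ d = u'+v' := by simpa using hdT2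
  have hd1 : ¬(d = u ∨ d = v ∨ d = u+v) := by simpa using hdT1
  have hum : u' = a ∨ u' = b ∨ u' = d := by
    have : u' ∈ ({a,b,d} : Finset ℕ) := by rw [habd]; simp
    simpa using this
  have hvm : v' = a ∨ v' = b ∨ v' = d := by
    have : v' ∈ ({a,b,d} : Finset ℕ) := by rw [habd]; simp
    simpa using this
  have hsm : u'+v' = a ∨ u'+v' = b ∨ u'+v' = d := by
    have : u'+v' ∈ ({a,b,d} : Finset ℕ) := by rw [habd]; simp
    simpa using this
  have hdna : d ≠ a := fun h => hdT1 (h ▸ haT1)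
  have hdnb : d ≠ b := fun h => hdT1 (h ▸ hbT1)
  have hrel : d = a + b ∨ a = b + d ∨ b = a + d := by
    clear hd1 ha1 hb1 hcard3 hcard3' hne hcard ha hb habd hT1 hT2 h4 hS
    omega
  have hdval : d = v - u ∨ d = u - v ∨ d = 2*u+v ∨ d = u+2*v := by
    clear ha2 hb2 hd2 hum hvm hsm habd hcard3 hcard3' hne hcard ha hb hT1 hT2 h4 hS
    omega
  have hUsub : insert d ({u,v,u+v} : Finset ℕ) ⊆ S :=
    Finset.insert_subset (hT2 hdT2) hT1
  refine h4 (insert d ({u,v,u+v} : Finset ℕ)) ?_ hUsub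
  refine Finset.mem_filter.2 ⟨?_, hUsub.trans hS, ?_⟩
  · rw [Finset.mem_union]
    rcases hdval with h | h | h | h
    · left
      refine Finset.mem_image.2 ⟨(u, v),
        Finset.mem_product.2 ⟨Finset.mem_Icc.2 ⟨by omega, by omega⟩,
          Finset.mem_Icc.2 ⟨by omega, by omega⟩⟩, ?_⟩
      rw [h]
    · left
      refine Finset.mem_image.2 ⟨(v, u),
        Finset.mem_product.2 ⟨Finset.mem_Icc.2 ⟨by omega, by omega⟩,
          Finset.mem_Icc.2 ⟨by omega, by omega⟩⟩, ?_⟩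
      ext w
      simp only [Finset.mem_insert, Finset.mem_singleton]
      omega
    · right
      refine Finset.mem_image.2 ⟨(u, v),
        Finset.mem_product.2 ⟨Finset.mem_Icc.2 ⟨by omega, by omega⟩,
          Finset.mem_Icc.2 ⟨by omega, by omega⟩⟩, ?_⟩
      rw [h]
    · right
      refine Finset.mem_image.2 ⟨(v, u),
        Finset.mem_product.2 ⟨Finset.mem_Icc.2 ⟨by omega, by omega⟩,
          Finset.mem_Icc.2 ⟨by omega, by omega⟩⟩, ?_⟩
      ext w
      simp only [Finset.mem_insert, Finset.mem_singleton]
      omega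
  · rw [Finset.card_insert_of_notMem hdT1, hcard3]

lemma coverage5 (n s : ℕ) (hs1 : 1 ≤ s) (hsn : 2*s ≤ n) (S : Finset ℕ)
    (hS : S ⊆ Finset.Icc 1 (n - s))
    (h2 : ∀ T ∈ pat2 n s, ¬ T ⊆ S) (h5 : ∀ T ∈ pat5 n s, ¬ T ⊆ S) :
    ∀ x y : ℕ, 1 ≤ x → x < y → n - s < x + y → x + y ≤ n →
      ¬ ({x, y, y - x} : Finset ℕ) ⊆ S := by
  intro x y hx1 hxy hz hzn hsub5
  have hxS := Finset.mem_Icc.1 (hS (hsub5 (show x ∈ ({x,y,y-x}:Finset ℕ) by simp)))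
  have hyS := Finset.mem_Icc.1 (hS (hsub5 (show y ∈ ({x,y,y-x}:Finset ℕ) by simp)))
  by_cases hy2x : y = 2*x
  · apply coverage2 n s S hS h2 x hx1
    intro w hw
    apply hsub5
    simp only [Finset.mem_insert, Finset.mem_singleton] at hw ⊢
    omega
  · refine h5 {x, y, y - x} ?_ hsub5
    refine Finset.mem_filter.2 ⟨?_, hsub5.trans hS,
      Finset.card_eq_three.2 ⟨x, y, y - x, by omega, by omega, by omega, rfl⟩⟩
    refine Finset.mem_image.2 ⟨(x, x + y - (n - s)),
      Finset.mem_product.2 ⟨Finset.mem_Icc.2 ⟨by omega, by omega⟩,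
        Finset.mem_Icc.2 ⟨by omega, by omega⟩⟩, ?_⟩
    ext w
    simp only [Finset.mem_insert, Finset.mem_singleton]
    omega


lemma key_ineq (c : ℝ) (hc : 0 < c) (n s : ℝ) (hn : 1 ≤ n) (hs1 : 1 ≤ s)
    (hcs : c * n ^ ((1:ℝ)/2) ≤ s) (e : ℝ) (he : 0 < e) :
    n ^ ((3:ℝ)/2 * e) ≤ (c ^ e)⁻¹ * (n * s) ^ e := by
  have hn0 : (0:ℝ) < n := by linarith
  have h32 : n * n ^ ((1:ℝ)/2) = n ^ ((3:ℝ)/2) := by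
    nth_rewrite 1 [← Real.rpow_one n]
    rw [← Real.rpow_add hn0]; norm_num
  have hns : c * n ^ ((3:ℝ)/2) ≤ n * s := by
    calc c * n ^ ((3:ℝ)/2) = n * (c * n ^ ((1:ℝ)/2)) := by rw [← h32]; ring
      _ ≤ n * s := mul_le_mul_of_nonneg_left hcs hn0.le
  have h1 : (c * n ^ ((3:ℝ)/2)) ^ e ≤ (n*s)^e :=
    Real.rpow_le_rpow (by positivity) hns he.le
  rw [Real.mul_rpow hc.le (by positivity), ← Real.rpow_mul hn0.le] at h1
  have hce : 0 < c ^ e := Real.rpow_pos_of_pos hc e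
  calc n ^ ((3:ℝ)/2 * e) = (c^e)⁻¹ * (c^e * n^((3:ℝ)/2*e)) := by field_simp
    _ ≤ (c^e)⁻¹ * (n*s)^e := by
        exact mul_le_mul_of_nonneg_left h1 (inv_nonneg.2 hce.le)

lemma rpow_pow_third (r : ℝ) (hr : 0 ≤ r) (k : ℕ) :
    (r ^ ((1:ℝ)/3)) ^ k = r ^ ((k:ℝ)/3) := by
  rw [← Real.rpow_natCast (r ^ ((1:ℝ)/3)) k, ← Real.rpow_mul hr]
  congr 1; ring

lemma sum_union_le' (f : Finset ℕ → ℝ) (hf : ∀ T, 0 ≤ f T) (A B : Finset (Finset ℕ)) :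
    ∑ T ∈ A ∪ B, f T ≤ ∑ T ∈ A, f T + ∑ T ∈ B, f T := by
  have h := Finset.sum_union_inter (s₁ := A) (s₂ := B) (f := f)
  have h2 : 0 ≤ ∑ T ∈ A ∩ B, f T := Finset.sum_nonneg fun T _ => hf T
  linarith


end Stmt12Aux

open Stmt12Aux

/-- Proposition 16: with `c·n^{1/2} ≤ s(n) ≤ n/2`,
`p = o((n·s(n))^{-1/3})` and `P ~ [n - s(n)]_{p(n)}`, with high probability: if no
colouring of `A_{s(n)} ∪ P` with `A_{s(n)}` blue is proper for `H_Schur(A_{s(n)} ∪ P)`,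
then every inclusion-minimal such family `H_min` is 3-uniform, has at most one vertex of
`A_{s(n)}` per edge, and is linear. -/
theorem stmt12 (c : ℝ) (hc : 0 < c) (s : ℕ → ℕ) (p : ℕ → ℝ)
    (hs : ∀ᶠ n : ℕ in atTop, 1 ≤ s n ∧ c * (n : ℝ) ^ ((1 : ℝ) / 2) ≤ (s n : ℝ) ∧
      (s n : ℝ) ≤ (n : ℝ) / 2)
    (hp : ∀ n, p n ∈ Set.Icc (0 : ℝ) 1)
    (hpo : Tendsto (fun n => p n / (((n : ℝ) * (s n : ℝ)) ^ (-(1 : ℝ) / 3)))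
      atTop (nhds 0)) :
    Tendsto (fun n => randProb (n - s n) (p n)
      {P : Finset ℕ |
        ¬ HasProperBlue (Finset.Icc (n - s n + 1) n)
            (SchurEdges (Finset.Icc (n - s n + 1) n ∪ P)) →
        ∀ Hmin : Set (Finset ℕ),
          Hmin ⊆ SchurEdges (Finset.Icc (n - s n + 1) n ∪ P) →
          ¬ HasProperBlue (Finset.Icc (n - s n + 1) n) Hmin →
          (∀ H' ⊆ Hmin, H' ≠ Hmin →
            HasProperBlue (Finset.Icc (n - s n + 1) n) H') →
          ((∀ e ∈ Hmin, e.card = 3) ∧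
            (∀ e ∈ Hmin, (e ∩ Finset.Icc (n - s n + 1) n).card ≤ 1) ∧
            (∀ e ∈ Hmin, ∀ e' ∈ Hmin, e ≠ e' → (e ∩ e').card ≤ 1))})
      atTop (nhds 1) := by
  classical
  have hp0 : ∀ k, 0 ≤ p k := fun k => (hp k).1
  set E : ℕ → Set (Finset ℕ) := fun n => {P : Finset ℕ |
      ¬ HasProperBlue (Finset.Icc (n - s n + 1) n)
          (SchurEdges (Finset.Icc (n - s n + 1) n ∪ P)) →
      ∀ Hmin : Set (Finset ℕ),
        Hmin ⊆ SchurEdges (Finset.Icc (n - s n + 1) n ∪ P) →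
        ¬ HasProperBlue (Finset.Icc (n - s n + 1) n) Hmin →
        (∀ H' ⊆ Hmin, H' ≠ Hmin →
          HasProperBlue (Finset.Icc (n - s n + 1) n) H') →
        ((∀ e ∈ Hmin, e.card = 3) ∧
          (∀ e ∈ Hmin, (e ∩ Finset.Icc (n - s n + 1) n).card ≤ 1) ∧
          (∀ e ∈ Hmin, ∀ e' ∈ Hmin, e ≠ e' → (e ∩ e').card ≤ 1))} with hEdef
  show Tendsto (fun n => randProb (n - s n) (p n) (E n)) atTop (nhds 1)
  set q : ℕ → ℝ := fun n => p n * ((n : ℝ) * (s n : ℝ)) ^ ((1:ℝ)/3) with hqdef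
  have hqn : ∀ n, q n = p n * ((n : ℝ) * (s n : ℝ)) ^ ((1:ℝ)/3) := fun _ => rfl
  have hGood : ∀ᶠ n : ℕ in atTop, 1 ≤ s n ∧ c * (n:ℝ) ^ ((1:ℝ)/2) ≤ (s n : ℝ) ∧
      2 * s n ≤ n ∧ 2 ≤ n := by
    filter_upwards [hs] with n hn
    obtain ⟨h1, h2, h3⟩ := hn
    have hs1R : (1:ℝ) ≤ (s n : ℝ) := by exact_mod_cast h1
    have h2n : (2:ℝ) ≤ (n:ℝ) := by linarith
    have hsnn : 2 * s n ≤ n := by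
      have h' : (2 * s n : ℝ) ≤ (n:ℝ) := by push_cast; linarith
      exact_mod_cast h'
    exact ⟨h1, h2, hsnn, by exact_mod_cast h2n⟩
  have hq0 : Tendsto q atTop (nhds 0) := by
    refine Tendsto.congr' ?_ hpo
    filter_upwards [hGood] with n hn
    obtain ⟨h1, _, _, h4⟩ := hn
    have hn1 : (1:ℝ) ≤ (n:ℝ) := by
      have : 1 ≤ n := by omega
      exact_mod_cast this
    have hs1R : (1:ℝ) ≤ (s n:ℝ) := by exact_mod_cast h1
    have hr : (0:ℝ) < (n:ℝ) * (s n:ℝ) := by nlinarith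
    show p n / ((n:ℝ) * (s n:ℝ)) ^ (-(1:ℝ)/3) = q n
    rw [hqn, show (-(1:ℝ)/3) = -((1:ℝ)/3) by norm_num, Real.rpow_neg hr.le,
      div_eq_mul_inv, inv_inv]
  have hMain : ∀ᶠ n : ℕ in atTop,
      1 - ((c ^ ((2:ℝ)/3))⁻¹ * q n ^ 2 + 5 * q n ^ 3
        + 2 * (c ^ ((4:ℝ)/3))⁻¹ * q n ^ 4)
        ≤ randProb (n - s n) (p n) (E n) := by
    filter_upwards [hGood] with n hn
    obtain ⟨hs1, hcs, hsnn, hn2⟩ := hn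
    set 𝒯 : Finset (Finset ℕ) :=
      ((pat2 n (s n) ∪ pat3 n (s n)) ∪ pat4 n (s n)) ∪ pat5 n (s n) with h𝒯
    have h𝒯sub : ∀ T ∈ 𝒯, T ⊆ Finset.Icc 1 (n - s n) := by
      intro T hT
      rw [h𝒯] at hT
      simp only [Finset.mem_union] at hT
      rcases hT with ((h | h) | h) | h
      · exact pat2_sub _ _ T h
      · exact pat3_sub _ _ T h
      · exact pat4_sub _ _ T h
      · exact pat5_sub _ _ T h
    have hcov : ∀ S : Finset ℕ, S ⊆ Finset.Icc 1 (n - s n) →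
        S ∉ {S : Finset ℕ | ∃ T ∈ 𝒯, T ⊆ S} → S ∈ E n := by
      intro S hSsub hSbad
      have hno : ∀ T ∈ 𝒯, ¬ T ⊆ S := fun T hT hTS => hSbad ⟨T, hT, hTS⟩
      have hno2 : ∀ T ∈ pat2 n (s n), ¬ T ⊆ S := fun T hT =>
        hno T (Finset.mem_union_left _ (Finset.mem_union_left _
          (Finset.mem_union_left _ hT)))
      have hno3 : ∀ T ∈ pat3 n (s n), ¬ T ⊆ S := fun T hT =>
        hno T (Finset.mem_union_left _ (Finset.mem_union_left _
          (Finset.mem_union_right _ hT)))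
      have hno4 : ∀ T ∈ pat4 n (s n), ¬ T ⊆ S := fun T hT =>
        hno T (Finset.mem_union_left _ (Finset.mem_union_right _ hT))
      have hno5 : ∀ T ∈ pat5 n (s n), ¬ T ⊆ S := fun T hT =>
        hno T (Finset.mem_union_right _ hT)
      exact deterministic n (s n) S hs1 hsnn hSsub
        (coverage2 n (s n) S hSsub hno2) (coverage3 n (s n) S hSsub hno3)
        (coverage4 n (s n) S hSsub hno4)
        (coverage5 n (s n) hs1 hsnn S hSsub hno2 hno5)
    have hBadLe : randProb (n - s n) (p n) {S : Finset ℕ | ∃ T ∈ 𝒯, T ⊆ S}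
        ≤ ∑ T ∈ 𝒯, p n ^ T.card := randProb_unionBound (hp n) _ 𝒯 h𝒯sub
    have hf : ∀ T : Finset ℕ, 0 ≤ p n ^ T.card := fun T => pow_nonneg (hp0 n) _
    have hsum2 : ∑ T ∈ pat2 n (s n), p n ^ T.card ≤ (n:ℝ) * p n ^ 2 := by
      refine le_trans (sum_pat_le (hp0 n) _ 2
        (fun T hT => ((Finset.mem_filter.1 hT).2).2)) ?_
      exact mul_le_mul_of_nonneg_right
        (by exact_mod_cast pat2_card n (s n)) (pow_nonneg (hp0 n) 2)
    have hsum3 : ∑ T ∈ pat3 n (s n), p n ^ T.card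
        ≤ 4 * (s n:ℝ) * (n:ℝ) * p n ^ 3 := by
      refine le_trans (sum_pat_le (hp0 n) _ 3
        (fun T hT => ((Finset.mem_filter.1 hT).2).2)) ?_
      have hcast : ((pat3 n (s n)).card : ℝ) ≤ 4 * (s n:ℝ) * (n:ℝ) := by
        have := pat3_card n (s n) hs1 hsnn
        exact_mod_cast this
      exact mul_le_mul_of_nonneg_right hcast (pow_nonneg (hp0 n) 3)
    have hsum4 : ∑ T ∈ pat4 n (s n), p n ^ T.card
        ≤ 2 * (n:ℝ) * (n:ℝ) * p n ^ 4 := by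
      refine le_trans (sum_pat_le (hp0 n) _ 4
        (fun T hT => ((Finset.mem_filter.1 hT).2).2)) ?_
      have hcast : ((pat4 n (s n)).card : ℝ) ≤ 2 * (n:ℝ) * (n:ℝ) := by
        have := pat4_card n (s n)
        exact_mod_cast this
      exact mul_le_mul_of_nonneg_right hcast (pow_nonneg (hp0 n) 4)
    have hsum5 : ∑ T ∈ pat5 n (s n), p n ^ T.card
        ≤ (n:ℝ) * (s n:ℝ) * p n ^ 3 := by
      refine le_trans (sum_pat_le (hp0 n) _ 3
        (fun T hT => ((Finset.mem_filter.1 hT).2).2)) ?_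
      have hcast : ((pat5 n (s n)).card : ℝ) ≤ (n:ℝ) * (s n:ℝ) := by
        have := pat5_card n (s n)
        exact_mod_cast this
      exact mul_le_mul_of_nonneg_right hcast (pow_nonneg (hp0 n) 3)
    have hsum : ∑ T ∈ 𝒯, p n ^ T.card ≤
        (n:ℝ) * p n ^ 2 + 4 * (s n:ℝ) * (n:ℝ) * p n ^ 3
          + 2 * (n:ℝ) * (n:ℝ) * p n ^ 4 + (n:ℝ) * (s n:ℝ) * p n ^ 3 := by
      have u1 := sum_union_le' _ hf ((pat2 n (s n) ∪ pat3 n (s n)) ∪ pat4 n (s n))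
        (pat5 n (s n))
      have u2 := sum_union_le' _ hf (pat2 n (s n) ∪ pat3 n (s n)) (pat4 n (s n))
      have u3 := sum_union_le' _ hf (pat2 n (s n)) (pat3 n (s n))
      rw [h𝒯]
      linarith
    have hEc : randProb (n - s n) (p n) (E n) + randProb (n - s n) (p n) (E n)ᶜ = 1 :=
      randProb_add_compl _ _ _
    have hmono : randProb (n - s n) (p n) (E n)ᶜ
        ≤ randProb (n - s n) (p n) {S : Finset ℕ | ∃ T ∈ 𝒯, T ⊆ S} := by
      refine randProb_mono (hp n) _ (fun S hSsub hSc => ?_)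
      by_contra hSbad
      exact hSc (hcov S hSsub hSbad)
    have hn1 : (1:ℝ) ≤ (n:ℝ) := by
      have : 1 ≤ n := by omega
      exact_mod_cast this
    have hs1R : (1:ℝ) ≤ (s n:ℝ) := by exact_mod_cast hs1
    have hr0 : (0:ℝ) ≤ (n:ℝ) * (s n:ℝ) := by positivity
    have hq2 : q n ^ 2 = p n ^ 2 * ((n:ℝ) * (s n:ℝ)) ^ ((2:ℝ)/3) := by
      rw [hqn, mul_pow, rpow_pow_third _ hr0 2]
      norm_num
    have hq3 : q n ^ 3 = p n ^ 3 * ((n:ℝ) * (s n:ℝ)) := by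
      rw [hqn, mul_pow, rpow_pow_third _ hr0 3]
      norm_num
    have hq4 : q n ^ 4 = p n ^ 4 * ((n:ℝ) * (s n:ℝ)) ^ ((4:ℝ)/3) := by
      rw [hqn, mul_pow, rpow_pow_third _ hr0 4]
      norm_num
    have hkey1 := key_ineq c hc (n:ℝ) (s n:ℝ) hn1 hs1R hcs ((2:ℝ)/3) (by norm_num)
    rw [show (3:ℝ)/2 * ((2:ℝ)/3) = 1 by norm_num, Real.rpow_one] at hkey1
    have hkey2 := key_ineq c hc (n:ℝ) (s n:ℝ) hn1 hs1R hcs ((4:ℝ)/3) (by norm_num)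
    rw [show (3:ℝ)/2 * ((4:ℝ)/3) = 2 by norm_num] at hkey2
    have hn2pow : (n:ℝ) ^ (2:ℝ) = (n:ℝ) * (n:ℝ) := by
      rw [show (2:ℝ) = ((2:ℕ):ℝ) by norm_num, Real.rpow_natCast]
      ring
    rw [hn2pow] at hkey2
    have t1 : (n:ℝ) * p n ^ 2 ≤ (c ^ ((2:ℝ)/3))⁻¹ * q n ^ 2 := by
      calc (n:ℝ) * p n ^ 2
          ≤ ((c ^ ((2:ℝ)/3))⁻¹ * ((n:ℝ)*(s n:ℝ)) ^ ((2:ℝ)/3)) * p n ^ 2 :=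
            mul_le_mul_of_nonneg_right hkey1 (by positivity)
        _ = (c ^ ((2:ℝ)/3))⁻¹ * q n ^ 2 := by rw [hq2]; ring
    have t3 : 2 * (n:ℝ) * (n:ℝ) * p n ^ 4
        ≤ 2 * (c ^ ((4:ℝ)/3))⁻¹ * q n ^ 4 := by
      calc 2 * (n:ℝ) * (n:ℝ) * p n ^ 4
          ≤ 2 * ((c ^ ((4:ℝ)/3))⁻¹ * ((n:ℝ)*(s n:ℝ)) ^ ((4:ℝ)/3)) * p n ^ 4 := by
            have h := mul_le_mul_of_nonneg_right hkey2
              (by positivity : (0:ℝ) ≤ 2 * p n ^ 4)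
            nlinarith [h]
        _ = 2 * (c ^ ((4:ℝ)/3))⁻¹ * q n ^ 4 := by rw [hq4]; ring
    have t2 : 4 * (s n:ℝ) * (n:ℝ) * p n ^ 3 + (n:ℝ) * (s n:ℝ) * p n ^ 3
        = 5 * q n ^ 3 := by rw [hq3]; ring
    linarith
  refine tendsto_of_tendsto_of_tendsto_of_le_of_le' ?_ tendsto_const_nhds hMain
    (Eventually.of_forall (fun n => randProb_le_one (hp n) (n - s n) (E n)))
  have l2 : Tendsto (fun n => q n ^ 2) atTop (nhds 0) := by
    have := hq0.pow 2
    simpa using this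
  have l3 : Tendsto (fun n => q n ^ 3) atTop (nhds 0) := by
    have := hq0.pow 3
    simpa using this
  have l4 : Tendsto (fun n => q n ^ 4) atTop (nhds 0) := by
    have := hq0.pow 4
    simpa using this
  have h0 : Tendsto (fun n => (c ^ ((2:ℝ)/3))⁻¹ * q n ^ 2 + 5 * q n ^ 3
      + 2 * (c ^ ((4:ℝ)/3))⁻¹ * q n ^ 4) atTop (nhds 0) := by
    have := ((l2.const_mul ((c ^ ((2:ℝ)/3))⁻¹)).add (l3.const_mul 5)).add
      (l4.const_mul (2 * (c ^ ((4:ℝ)/3))⁻¹))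
    simpa using this
  have hone : Tendsto (fun _ : ℕ => (1:ℝ)) atTop (nhds 1) := tendsto_const_nhds
  have hfin := Tendsto.sub hone h0
  simpa using hfin
end

section
/- For every positive integer n and every α ∈ [n], there exist η ∈ [n] with η ≥ n/2, a set Q ⊆ [η] \ {α} with |Q| ≥ η − 3, and a partition of Q into two-element sets such that every pair {π₁, π₂} of the partition satisfies π₁ + π₂ = α, or π₁ + α = π₂, or π₂ + α = π₁ (equivalently, {π₁, π₂, α} hosts a Schur triple). -/
private lemma keydiv (α u v r s : ℕ) (hr : 1 ≤ r) (hr' : r ≤ α) (hs : 1 ≤ s) (hs' : s ≤ α)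
    (h : u * α + r = v * α + s) : u = v ∧ r = s := by
  rcases Nat.le_total u v with h1 | h1
  · obtain ⟨d, rfl⟩ := Nat.exists_eq_add_of_le h1
    rw [add_mul] at h
    rcases Nat.eq_zero_or_pos d with rfl | hd
    · refine ⟨by omega, ?_⟩
      simp only [Nat.zero_mul, Nat.add_zero] at h
      exact Nat.add_left_cancel h
    · exfalso
      have : α ≤ d * α := Nat.le_mul_of_pos_left α hd
      omega
  · obtain ⟨d, rfl⟩ := Nat.exists_eq_add_of_le h1
    rw [add_mul] at h
    rcases Nat.eq_zero_or_pos d with rfl | hd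
    · refine ⟨by omega, ?_⟩
      simp only [Nat.zero_mul, Nat.add_zero] at h
      exact Nat.add_left_cancel h
    · exfalso
      have : α ≤ d * α := Nat.le_mul_of_pos_left α hd
      omega

/-- display (6) in the proof of Claim 22: for every `n ≥ 1` and every
`α ∈ [n]`, there exist `η ∈ [n]` with `η ≥ n/2` and a set `Q ⊆ [η] \ {α}` with
`|Q| ≥ η − 3` admitting a partition into pairs `{π₁, π₂}` such that `{π₁, π₂, α}` hosts a
Schur triple, i.e. `π₁ + π₂ = α`, `π₁ + α = π₂`, or `π₂ + α = π₁`. -/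
theorem stmt18 (n : ℕ) (hn : 0 < n) (α : ℕ) (hα : α ∈ Finset.Icc 1 n) :
    ∃ η ∈ Finset.Icc 1 n, (n : ℝ) / 2 ≤ (η : ℝ) ∧
      ∃ Q : Finset ℕ, Q ⊆ Finset.Icc 1 η \ {α} ∧ η - 3 ≤ Q.card ∧
        ∃ Pa : Finset (Finset ℕ),
          (∀ e ∈ Pa, e.card = 2) ∧
          (∀ e ∈ Pa, ∀ e' ∈ Pa, e ≠ e' → Disjoint e e') ∧
          Pa.biUnion id = Q ∧
          ∀ e ∈ Pa, ∃ π₁ ∈ e, ∃ π₂ ∈ e, π₁ ≠ π₂ ∧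
            (π₁ + π₂ = α ∨ π₁ + α = π₂ ∨ π₂ + α = π₁) := by
  rw [Finset.mem_Icc] at hα
  obtain ⟨hα1, hα2⟩ := hα
  by_cases hcase : 2 * α ≤ n
  · -- small α: η = 2kα with k = n/(2α), pairs {2iα+r, (2i+1)α+r} minus {α, 2α}
    set k := n / (2 * α) with hk
    have hα0 : 0 < α := hα1
    have hk1 : 1 ≤ k := (Nat.one_le_div_iff (by omega)).mpr hcase
    have hηn : 2 * k * α ≤ n := by
      have h := Nat.div_mul_le_self n (2 * α)
      calc 2 * k * α = k * (2 * α) := by ring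
        _ ≤ n := h
    have hη1 : 1 ≤ 2 * k * α := by
      have : 1 * 1 ≤ (2 * k) * α := Nat.mul_le_mul (by omega) hα0
      omega
    have hn2 : n + 1 ≤ 2 * (2 * k * α) := by
      have hmod := Nat.div_add_mod n (2 * α)
      have hlt : n % (2 * α) < 2 * α := Nat.mod_lt _ (by omega)
      have hke : α * 1 ≤ α * k := Nat.mul_le_mul_left α hk1
      rw [← hk] at hmod
      have he : 2 * α * k = 2 * (α * k) := by ring
      have he2 : 2 * k * α = 2 * (α * k) := by ring
      rw [he] at hmod
      rw [he2]
      omega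
    have hpair : ∀ p : ℕ × ℕ, ({2 * p.1 * α + p.2, (2 * p.1 + 1) * α + p.2} : Finset ℕ) =
        {2 * p.1 * α + p.2, (2 * p.1 + 1) * α + p.2} := fun _ => rfl
    set f : ℕ × ℕ → Finset ℕ :=
      fun p => ({2 * p.1 * α + p.2, (2 * p.1 + 1) * α + p.2} : Finset ℕ) with hf
    set D : Finset (ℕ × ℕ) := Finset.range k ×ˢ Finset.Icc 1 α with hD
    set Pa : Finset (Finset ℕ) := D.image f \ {({α, 2 * α} : Finset ℕ)} with hPa
    have hmemD : ∀ p ∈ D, p.1 < k ∧ 1 ≤ p.2 ∧ p.2 ≤ α := by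
      intro p hp
      rw [hD, Finset.mem_product, Finset.mem_range, Finset.mem_Icc] at hp
      exact ⟨hp.1, hp.2.1, hp.2.2⟩
    have hf0 : f (0, α) = ({α, 2 * α} : Finset ℕ) := by
      rw [hf]
      simp only
      congr 1 <;> [skip; congr 1] <;> ring_nf
    -- membership characterization
    have hmemPa : ∀ e ∈ Pa, ∃ i r, i < k ∧ 1 ≤ r ∧ r ≤ α ∧ ¬(i = 0 ∧ r = α) ∧
        e = ({2 * i * α + r, (2 * i + 1) * α + r} : Finset ℕ) := by
      intro e he
      rw [hPa, Finset.mem_sdiff, Finset.mem_image] at he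
      obtain ⟨⟨p, hp, hpe⟩, hne⟩ := he
      obtain ⟨hi, hr1, hr2⟩ := hmemD p hp
      refine ⟨p.1, p.2, hi, hr1, hr2, ?_, hpe.symm⟩
      rintro ⟨h1, h2⟩
      apply hne
      rw [Finset.mem_singleton, ← hpe, ← hf0]
      congr 1
      exact Prod.ext h1 h2
    refine ⟨2 * k * α, Finset.mem_Icc.mpr ⟨hη1, hηn⟩, ?_, Pa.biUnion id, ?_, ?_, Pa, ?_, ?_, rfl, ?_⟩
    · have : (n : ℝ) + 1 ≤ 2 * (2 * k * α : ℕ) := by exact_mod_cast hn2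
      linarith
    · -- subset
      intro m hm
      rw [Finset.mem_biUnion] at hm
      obtain ⟨e, he, hme⟩ := hm
      obtain ⟨i, r, hi, hr1, hr2, hnex, rfl⟩ := hmemPa e he
      rw [Finset.mem_sdiff, Finset.mem_Icc, Finset.mem_singleton]
      simp only [Finset.mem_insert, Finset.mem_singleton, id] at hme
      have hub1 : (2 * i + 1) * α + r ≤ 2 * k * α := by
        have : (2 * i + 2) * α ≤ (2 * k) * α := Nat.mul_le_mul (by omega) le_rfl
        have : (2 * i + 1) * α + α = (2 * i + 2) * α := by ring
        omega
      have hub0 : 2 * i * α + r ≤ 2 * k * α := by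
        have h1 : (2 * i) * α ≤ (2 * i + 1) * α := Nat.mul_le_mul (by omega) le_rfl
        omega
      rcases hme with rfl | rfl
      · refine ⟨⟨by omega, hub0⟩, ?_⟩
        intro heq
        have : 2 * i * α + r = 0 * α + α := by omega
        obtain ⟨h1, h2⟩ := keydiv α _ _ _ _ hr1 hr2 hα1 le_rfl this
        exact hnex ⟨by omega, h2⟩
      · refine ⟨⟨by omega, hub1⟩, ?_⟩
        intro heq
        have : (2 * i + 1) * α + r = 0 * α + α := by omega
        obtain ⟨h1, h2⟩ := keydiv α _ _ _ _ hr1 hr2 hα1 le_rfl this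
        omega
    · -- card bound
      have hcard2 : ∀ e ∈ Pa, e.card = 2 := by
        intro e he
        obtain ⟨i, r, hi, hr1, hr2, hnex, rfl⟩ := hmemPa e he
        have hne : 2 * i * α + r ≠ (2 * i + 1) * α + r := by
          intro h
          obtain ⟨h1, h2⟩ := keydiv α _ _ _ _ hr1 hr2 hr1 hr2 h
          omega
        exact Finset.card_pair hne
      have hdisj : ∀ e ∈ Pa, ∀ e' ∈ Pa, e ≠ e' → Disjoint e e' := by
        intro e he e' he' hne
        obtain ⟨i, r, hi, hr1, hr2, _, rfl⟩ := hmemPa e he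
        obtain ⟨j, s, hj, hs1, hs2, _, rfl⟩ := hmemPa e' he'
        rw [Finset.disjoint_left]
        intro m hm hm'
        simp only [Finset.mem_insert, Finset.mem_singleton] at hm hm'
        have hirjs : i = j ∧ r = s := by
          rcases hm with rfl | rfl <;> rcases hm' with h | h <;>
            obtain ⟨h1, h2⟩ := keydiv α _ _ _ _ hr1 hr2 hs1 hs2 h <;>
            exact ⟨by omega, h2⟩
        obtain ⟨rfl, rfl⟩ := hirjs
        exact hne rfl
      rw [Finset.card_biUnion (by intro e he e' he' h; exact hdisj e he e' he' h)]
      have hsum : ∑ e ∈ Pa, (id e).card = 2 * Pa.card := by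
        have h1 : ∑ e ∈ Pa, (id e).card = ∑ _e ∈ Pa, 2 :=
          Finset.sum_congr rfl (fun e he => hcard2 e he)
        rw [h1, Finset.sum_const, smul_eq_mul]
        ring
      rw [hsum]
      have hinj : Set.InjOn f D := by
        intro p hp q hq hpq
        obtain ⟨hi, hr1, hr2⟩ := hmemD p hp
        obtain ⟨hj, hs1, hs2⟩ := hmemD q hq
        have hmem : 2 * p.1 * α + p.2 ∈ f q := by
          rw [← hpq, hf]; exact Finset.mem_insert_self _ _
        rw [hf] at hmem
        simp only [Finset.mem_insert, Finset.mem_singleton] at hmem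
        rcases hmem with h | h <;>
          obtain ⟨h1, h2⟩ := keydiv α _ _ _ _ hr1 hr2 hs1 hs2 h
        · exact Prod.ext (by omega) h2
        · omega
      have hDcard : D.card = k * α := by
        rw [hD, Finset.card_product, Finset.card_range, Nat.card_Icc, Nat.add_sub_cancel]
      have himage : (D.image f).card = k * α := by
        rw [Finset.card_image_of_injOn hinj, hDcard]
      have hsub : ({({α, 2 * α} : Finset ℕ)} : Finset (Finset ℕ)) ⊆ D.image f := by
        rw [Finset.singleton_subset_iff, Finset.mem_image]
        refine ⟨(0, α), ?_, hf0⟩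
        rw [hD, Finset.mem_product, Finset.mem_range, Finset.mem_Icc]
        exact ⟨hk1, hα1, le_rfl⟩
      have hPacard : Pa.card = k * α - 1 := by
        rw [hPa, Finset.card_sdiff_of_subset hsub, himage, Finset.card_singleton]
      rw [hPacard]
      have hkα : 1 ≤ k * α := Nat.mul_pos hk1 hα0
      have he2 : 2 * k * α = 2 * (k * α) := by ring
      omega
    · intro e he
      obtain ⟨i, r, hi, hr1, hr2, hnex, rfl⟩ := hmemPa e he
      have hne : 2 * i * α + r ≠ (2 * i + 1) * α + r := by
        intro h
        obtain ⟨h1, h2⟩ := keydiv α _ _ _ _ hr1 hr2 hr1 hr2 h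
        omega
      exact Finset.card_pair hne
    · intro e he e' he' hne
      obtain ⟨i, r, hi, hr1, hr2, _, rfl⟩ := hmemPa e he
      obtain ⟨j, s, hj, hs1, hs2, _, rfl⟩ := hmemPa e' he'
      rw [Finset.disjoint_left]
      intro m hm hm'
      simp only [Finset.mem_insert, Finset.mem_singleton] at hm hm'
      have hirjs : i = j ∧ r = s := by
        rcases hm with rfl | rfl <;> rcases hm' with h | h <;>
          obtain ⟨h1, h2⟩ := keydiv α _ _ _ _ hr1 hr2 hs1 hs2 h <;>
          exact ⟨by omega, h2⟩
      obtain ⟨rfl, rfl⟩ := hirjs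
      exact absurd rfl hne
    · intro e he
      obtain ⟨i, r, hi, hr1, hr2, hnex, rfl⟩ := hmemPa e he
      refine ⟨2 * i * α + r, Finset.mem_insert_self _ _, (2 * i + 1) * α + r,
        Finset.mem_insert_of_mem (Finset.mem_singleton_self _), ?_, ?_⟩
      · intro h
        obtain ⟨h1, h2⟩ := keydiv α _ _ _ _ hr1 hr2 hr1 hr2 h
        omega
      · right; left; ring
  · -- large α: η = α, sum pairs {x, α - x}
    push_neg at hcase
    set Pa : Finset (Finset ℕ) :=
      (Finset.Icc 1 ((α - 1) / 2)).image (fun x => ({x, α - x} : Finset ℕ)) with hPa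
    have hmemPa : ∀ e ∈ Pa, ∃ x, 1 ≤ x ∧ x ≤ (α - 1) / 2 ∧ e = ({x, α - x} : Finset ℕ) := by
      intro e he
      rw [hPa, Finset.mem_image] at he
      obtain ⟨x, hx, hxe⟩ := he
      rw [Finset.mem_Icc] at hx
      exact ⟨x, hx.1, hx.2, hxe.symm⟩
    have hcard2 : ∀ e ∈ Pa, e.card = 2 := by
      intro e he
      obtain ⟨x, hx1, hx2, rfl⟩ := hmemPa e he
      exact Finset.card_pair (by omega)
    have hdisj : ∀ e ∈ Pa, ∀ e' ∈ Pa, e ≠ e' → Disjoint e e' := by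
      intro e he e' he' hne
      obtain ⟨x, hx1, hx2, rfl⟩ := hmemPa e he
      obtain ⟨y, hy1, hy2, rfl⟩ := hmemPa e' he'
      rw [Finset.disjoint_left]
      intro m hm hm'
      simp only [Finset.mem_insert, Finset.mem_singleton] at hm hm'
      have : x = y := by omega
      subst this
      exact hne rfl
    refine ⟨α, Finset.mem_Icc.mpr ⟨hα1, hα2⟩, ?_, Pa.biUnion id, ?_, ?_, Pa, hcard2, hdisj, rfl, ?_⟩
    · have : (n : ℝ) < 2 * α := by exact_mod_cast hcase
      linarith
    · intro m hm
      rw [Finset.mem_biUnion] at hm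
      obtain ⟨e, he, hme⟩ := hm
      obtain ⟨x, hx1, hx2, rfl⟩ := hmemPa e he
      simp only [Finset.mem_insert, Finset.mem_singleton, id] at hme
      rw [Finset.mem_sdiff, Finset.mem_Icc, Finset.mem_singleton]
      omega
    · rw [Finset.card_biUnion (by intro e he e' he' h; exact hdisj e he e' he' h)]
      have hsum : ∑ e ∈ Pa, (id e).card = 2 * Pa.card := by
        have h1 : ∑ e ∈ Pa, (id e).card = ∑ _e ∈ Pa, 2 :=
          Finset.sum_congr rfl (fun e he => hcard2 e he)
        rw [h1, Finset.sum_const, smul_eq_mul]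
        ring
      rw [hsum]
      have hinj : Set.InjOn (fun x => ({x, α - x} : Finset ℕ)) (Finset.Icc 1 ((α - 1) / 2)) := by
        intro x hx y hy hxy
        rw [Finset.coe_Icc, Set.mem_Icc] at hx hy
        have h2 : ({x, α - x} : Finset ℕ) = ({y, α - y} : Finset ℕ) := hxy
        have hmem : x ∈ ({y, α - y} : Finset ℕ) := h2 ▸ Finset.mem_insert_self _ _
        simp only [Finset.mem_insert, Finset.mem_singleton] at hmem
        omega
      rw [hPa, Finset.card_image_of_injOn hinj, Nat.card_Icc]
      omega
    · intro e he
      obtain ⟨x, hx1, hx2, rfl⟩ := hmemPa e he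
      refine ⟨x, Finset.mem_insert_self _ _, α - x,
        Finset.mem_insert_of_mem (Finset.mem_singleton_self _), by omega, ?_⟩
      left; omega
end
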